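/- arXiv:1003.2898 — 8 statements merged into one kernel-verified Lean document; each statement's English description precedes it below -/
import Mathlib

section
/- Let A₁,…,A_m be the tiles of a tile-substitution with pairwise disjoint interiors at the first level; then the subdivision iterates: for every n ≥ 1 and every j ≤ m one has Qⁿ A_j = ⋃_{i≤m} ((Dⁿ)_{ij} + A_i), and whenever (i,d) ≠ (i′,d′) with d ∈ (Dⁿ)_{ij} and d′ ∈ (Dⁿ)_{i′j}, the interiors of d + A_i and d′ + A_{i′} are disjoint. -/
open Pointwise Set

noncomputable section

/-- Iterated digit sets: `iterD Q D n i j` is `(Dⁿ)_{ij}`, with the convention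
`(D⁰)_{ij} = {0}` if `i = j` and `∅` otherwise. -/
def iterD {E : Type*} [AddCommGroup E] {m : ℕ}
    (Q : E → E) (D : Fin m → Fin m → Set E) : ℕ → Fin m → Fin m → Set E
  | 0 => fun i j => if i = j then {0} else ∅
  | n + 1 => fun i j => ⋃ l : Fin m, D i l + Q '' iterD Q D n l j

/-- the subdivision of tiles iterates: for every `n ≥ 1` and `j`,
`Qⁿ A_j = ⋃_i ((Dⁿ)_{ij} + A_i)`, with pairwise disjoint interiors of the pieces. -/
theorem stmt_0 (d m : ℕ) (hd : 1 ≤ d) (hm : 1 ≤ m)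
    (Q : EuclideanSpace ℝ (Fin d) ≃L[ℝ] EuclideanSpace ℝ (Fin d))
    (D : Fin m → Fin m → Set (EuclideanSpace ℝ (Fin d)))
    (hDfin : ∀ i j, (D i j).Finite)
    (A : Fin m → Set (EuclideanSpace ℝ (Fin d)))
    (hAne : ∀ i, (A i).Nonempty) (hAcp : ∀ i, IsCompact (A i))
    (htile : ∀ j, ⇑Q '' A j = ⋃ i, D i j + A i)
    (hdisj : ∀ j : Fin m, ∀ i i' : Fin m, ∀ x ∈ D i j, ∀ x' ∈ D i' j,
      (i, x) ≠ (i', x') →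
        interior (x +ᵥ A i) ∩ interior (x' +ᵥ A i') = ∅) :
    ∀ n : ℕ, 1 ≤ n → ∀ j : Fin m,
      ((⇑Q)^[n] '' A j = ⋃ i, iterD (⇑Q) D n i j + A i) ∧
      (∀ i i' : Fin m, ∀ x ∈ iterD (⇑Q) D n i j, ∀ x' ∈ iterD (⇑Q) D n i' j,
        (i, x) ≠ (i', x') →
          interior (x +ᵥ A i) ∩ interior (x' +ᵥ A i') = ∅) := by
  have hQadd : ∀ s t : Set (EuclideanSpace ℝ (Fin d)),
      ⇑Q '' (s + t) = ⇑Q '' s + ⇑Q '' t := fun s t => Set.image_add Q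
  have hQint : ∀ s : Set (EuclideanSpace ℝ (Fin d)),
      ⇑Q '' interior s = interior (⇑Q '' s) := fun s => by
    simpa using Q.toHomeomorph.image_interior s
  -- level-one iterated digits are just the digits
  have h1 : ∀ i j, iterD (⇑Q) D 1 i j = D i j := by
    intro i j
    have key : ∀ l : Fin m, D i l + ⇑Q '' iterD (⇑Q) D 0 l j
        = if l = j then D i j else ∅ := by
      intro l
      by_cases h : l = j
      · subst h
        simp only [iterD, if_pos rfl, Set.image_singleton, map_zero, if_pos rfl]
        simp [Set.add_singleton]
      · simp [iterD, h]
    show (⋃ l, D i l + ⇑Q '' iterD (⇑Q) D 0 l j) = D i j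
    simp_rw [key]
    apply Set.Subset.antisymm
    · exact Set.iUnion_subset fun l => by split_ifs <;> simp
    · intro x hx
      exact Set.mem_iUnion.2 ⟨j, by simp [hx]⟩
  -- a piece of the subdivision is contained in the image of a previous piece
  have hsub : ∀ (i0 l0 : Fin m) (d0 y0 : EuclideanSpace ℝ (Fin d)), d0 ∈ D i0 l0 →
      (d0 + Q y0) +ᵥ A i0 ⊆ ⇑Q '' (y0 +ᵥ A l0) := by
    intro i0 l0 d0 y0 hd0 z hz
    rw [Set.mem_vadd_set] at hz
    obtain ⟨a, ha, rfl⟩ := hz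
    have hmem : d0 + a ∈ ⇑Q '' A l0 := by
      rw [htile l0]
      exact Set.mem_iUnion.2 ⟨i0, add_mem_add hd0 ha⟩
    obtain ⟨b, hb, hba⟩ := hmem
    refine ⟨y0 + b, vadd_mem_vadd_set hb, ?_⟩
    rw [map_add, hba]
    simp only [vadd_eq_add]
    abel
  intro n
  induction n with
  | zero => omega
  | succ n ih =>
    intro _
    rcases Nat.eq_zero_or_pos n with h0 | hnpos
    · -- base case n + 1 = 1
      subst h0
      intro j
      constructor
      · rw [Function.iterate_one]
        simp_rw [h1]
        exact htile j
      · intro i i' x hx x' hx' hne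
        rw [h1] at hx hx'
        exact hdisj j i i' x hx x' hx' hne
    · -- inductive step
      have IH := ih hnpos
      intro j
      constructor
      · rw [Function.iterate_succ', Set.image_comp, (IH j).1, Set.image_iUnion]
        simp_rw [hQadd, htile, Set.add_iUnion]
        rw [iUnion_comm]
        refine iUnion_congr fun i => ?_
        rw [show iterD (⇑Q) D (n + 1) i j
            = ⋃ l, D i l + ⇑Q '' iterD (⇑Q) D n l j from rfl, Set.iUnion_add]
        refine iUnion_congr fun l => ?_
        rw [← add_assoc, add_comm (⇑Q '' iterD (⇑Q) D n l j) (D i l), add_assoc]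
      · intro i i' x hx x' hx' hne
        simp only [iterD, Set.mem_iUnion, Set.mem_add, Set.mem_image] at hx hx'
        obtain ⟨l, dd, hdd, _, ⟨y, hy, rfl⟩, rfl⟩ := hx
        obtain ⟨l', dd', hdd', _, ⟨y', hy', rfl⟩, rfl⟩ := hx'
        by_cases hly : (⟨l, y⟩ : Fin m × EuclideanSpace ℝ (Fin d)) = ⟨l', y'⟩
        · rw [Prod.mk.injEq] at hly
          obtain ⟨rfl, rfl⟩ := hly
          have hne' : (i, dd) ≠ (i', dd') := by
            intro h
            apply hne
            rw [Prod.mk.injEq] at h ⊢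
            exact ⟨h.1, by rw [h.2]⟩
          have hdj := hdisj l i i' dd hdd dd' hdd' hne'
          rw [add_comm dd (Q y), add_comm dd' (Q y), ← vadd_vadd, ← vadd_vadd,
            interior_vadd (Q y) (dd +ᵥ A i), interior_vadd (Q y) (dd' +ᵥ A i'),
            ← Set.vadd_set_inter, hdj]
          simp
        · have hint := (IH j).2 l l' y hy y' hy' hly
          have hs1 : interior ((dd + Q y) +ᵥ A i) ⊆ ⇑Q '' interior (y +ᵥ A l) := by
            rw [hQint]
            exact interior_mono (hsub i l dd y hdd)
          have hs2 : interior ((dd' + Q y') +ᵥ A i') ⊆ ⇑Q '' interior (y' +ᵥ A l') := by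
            rw [hQint]
            exact interior_mono (hsub i' l' dd' y' hdd')
          rw [← Set.subset_empty_iff]
          calc interior ((dd + Q y) +ᵥ A i) ∩ interior ((dd' + Q y') +ᵥ A i')
              ⊆ ⇑Q '' interior (y +ᵥ A l) ∩ ⇑Q '' interior (y' +ᵥ A l') :=
                Set.inter_subset_inter hs1 hs2
            _ = ⇑Q '' (interior (y +ᵥ A l) ∩ interior (y' +ᵥ A l')) :=
                (Set.image_inter Q.injective).symm
            _ = ∅ := by rw [hint, Set.image_empty]
end
end

section
/- Every point of a tile of a tile-substitution has a radix expansion in the iterated digit sets: for every j ≤ m and every a ∈ A_j there exist a sequence of colours i₀ = j, i₁, i₂, … in {1,…,m} and digits d_n ∈ (D^k)_{i_n i_{n−1}} (n ≥ 1) such that the series Σ_{n=1}^∞ Q^{−nk} d_n converges to a. -/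
/-!
Iterating the set equation `k` times gives `Qᵏ A_j ⊆ ⋃ i, (Dᵏ)_{ij} + A_i`, so every `a ∈ A_j`
is `Q⁻ᵏ (e + a')` with `e ∈ (Dᵏ)_{ij}` and `a' ∈ A_i`. Repeating this step by dependent choice
produces colours `c n`, digits `d n` and points `a n ∈ A (c n)` with
`a = ∑_{n < N} Q^{-(n+1)k} d (n+1) + Q^{-Nk} a N`; the remainder tends to `0` because the `a n`
lie in the bounded set `⋃ i, A i` and `‖Q⁻ᵏ‖ < 1`.
-/

open Pointwise Set Filter

noncomputable section

section IterD

variable {E F : Type*} [AddCommGroup E] [FunLike F E E] [AddMonoidHomClass F E E] {m : ℕ}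

theorem iterate_image_subset_iUnion_iterD_add (Q : F) (D : Fin m → Fin m → Set E)
    {A : Fin m → Set E} (hA : ∀ j, Q '' A j ⊆ ⋃ i, D i j + A i) (n : ℕ) (j : Fin m) :
    (⇑Q)^[n] '' A j ⊆ ⋃ i, iterD Q D n i j + A i := by
  rintro _ ⟨a, ha, rfl⟩
  induction n with
  | zero => exact mem_iUnion.2 ⟨j, 0, by simp [iterD], a, ha, zero_add a⟩
  | succ n ih =>
    obtain ⟨l, hl⟩ := mem_iUnion.1 ih
    obtain ⟨e, he, a', ha', hsum⟩ := mem_add.1 hl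
    obtain ⟨i, hi⟩ := mem_iUnion.1 (hA l ⟨a', ha', rfl⟩)
    obtain ⟨f, hf, a'', ha'', hsum'⟩ := mem_add.1 hi
    refine mem_iUnion.2 ⟨i, f + Q e, mem_iUnion.2 ⟨l, add_mem_add hf ⟨e, he, rfl⟩⟩, a'', ha'', ?_⟩
    show f + Q e + a'' = _
    rw [Function.iterate_succ_apply', ← hsum, map_add, ← hsum']
    abel

end IterD

section Equiv

variable {R E : Type*} [Semiring R] [AddCommGroup E] [TopologicalSpace E] [Module R E]

theorem exists_eq_symm_pow_apply_add {m : ℕ} (Q : E ≃L[R] E) (D : Fin m → Fin m → Set E)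
    {A : Fin m → Set E} (hA : ∀ j, Q '' A j ⊆ ⋃ i, D i j + A i) (k : ℕ) {j : Fin m} {a : E}
    (ha : a ∈ A j) :
    ∃ i, ∃ e ∈ iterD Q D k i j, ∃ a' ∈ A i, a = ((Q.symm : E →L[R] E) ^ k) (e + a') := by
  obtain ⟨i, hi⟩ := mem_iUnion.1 (iterate_image_subset_iUnion_iterD_add Q D hA k j ⟨a, ha, rfl⟩)
  obtain ⟨e, he, a', ha', hsum⟩ := mem_add.1 hi
  refine ⟨i, e, he, a', ha', ?_⟩
  rw [hsum, FunLike.coe_pow_eq_iterate]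
  exact (Function.LeftInverse.iterate Q.symm_apply_apply k a).symm

end Equiv

theorem exists_seq_of_forall_exists {α : Type*} {P : α → Prop} {R : α → α → Prop}
    (h : ∀ a, P a → ∃ b, P b ∧ R a b) {a₀ : α} (h₀ : P a₀) :
    ∃ s : ℕ → α, s 0 = a₀ ∧ ∀ n, P (s n) ∧ R (s n) (s (n + 1)) := by
  choose! f hfP hfR using h
  have hP : ∀ n, P (f^[n] a₀) := fun n => by
    induction n with
    | zero => exact h₀
    | succ n ih => rw [Function.iterate_succ_apply']; exact hfP _ ih
  refine ⟨fun n => f^[n] a₀, rfl, fun n => ⟨hP n, ?_⟩⟩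
  show R (f^[n] a₀) (f^[n + 1] a₀)
  rw [Function.iterate_succ_apply']
  exact hfR _ (hP n)

section Normed

variable {𝕜 E : Type*} [NontriviallyNormedField 𝕜] [SeminormedAddCommGroup E] [NormedSpace 𝕜 E]

theorem ContinuousLinearMap.norm_pow_apply_le (T : E →L[𝕜] E) (n : ℕ) (x : E) :
    ‖(T ^ n) x‖ ≤ ‖T‖ ^ n * ‖x‖ := by
  induction n generalizing x with
  | zero => simp
  | succ n ih =>
    calc ‖(T ^ (n + 1)) x‖ = ‖(T ^ n) (T x)‖ := by rw [pow_succ, mul_apply_eq_comp]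
      _ ≤ ‖T‖ ^ n * (‖T‖ * ‖x‖) := (ih (T x)).trans (by gcongr; exact T.le_opNorm x)
      _ = ‖T‖ ^ (n + 1) * ‖x‖ := by ring

theorem ContinuousLinearMap.tendsto_pow_apply_of_norm_lt_one (T : E →L[𝕜] E) (hT : ‖T‖ < 1)
    {x : ℕ → E} {C : ℝ} (hx : ∀ n, ‖x n‖ ≤ C) :
    Tendsto (fun n => (T ^ n) (x n)) atTop (nhds 0) := by
  refine squeeze_zero_norm (fun n => (T.norm_pow_apply_le n (x n)).trans ?_)
    (by simpa using (tendsto_pow_atTop_nhds_zero_of_lt_one (norm_nonneg T) hT).mul_const C)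
  gcongr
  exact hx n

theorem ContinuousLinearMap.sum_range_pow_apply_eq_sub (T : E →L[𝕜] E) {x e : ℕ → E}
    (h : ∀ n, x n = T (e (n + 1)) + T (x (n + 1))) (N : ℕ) :
    ∑ n ∈ Finset.range N, (T ^ (n + 1)) (e (n + 1)) = x 0 - (T ^ N) (x N) := by
  induction N with
  | zero => simp
  | succ N ih =>
    rw [Finset.sum_range_succ, ih, h N, map_add, pow_succ, mul_apply_eq_comp, mul_apply_eq_comp]
    abel

theorem ContinuousLinearMap.tendsto_sum_range_pow_apply (T : E →L[𝕜] E) (hT : ‖T‖ < 1)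
    {x e : ℕ → E} {C : ℝ} (hx : ∀ n, ‖x n‖ ≤ C) (h : ∀ n, x n = T (e (n + 1)) + T (x (n + 1))) :
    Tendsto (fun N => ∑ n ∈ Finset.range N, (T ^ (n + 1)) (e (n + 1))) atTop (nhds (x 0)) := by
  have := (T.tendsto_pow_apply_of_norm_lt_one hT hx).const_sub (x 0)
  rw [sub_zero] at this
  exact this.congr fun N => (T.sum_range_pow_apply_eq_sub h N).symm

end Normed

theorem stmt_2_general (d m k : ℕ)
    (Q : EuclideanSpace ℝ (Fin d) ≃L[ℝ] EuclideanSpace ℝ (Fin d))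
    (hQk : ‖(Q.symm : EuclideanSpace ℝ (Fin d) →L[ℝ] EuclideanSpace ℝ (Fin d)) ^ k‖ < 1)
    (D : Fin m → Fin m → Set (EuclideanSpace ℝ (Fin d)))
    (A : Fin m → Set (EuclideanSpace ℝ (Fin d)))
    (hAcp : ∀ i, IsCompact (A i))
    (htile : ∀ j, ⇑Q '' A j = ⋃ i, D i j + A i) :
    ∀ j : Fin m, ∀ a ∈ A j,
      ∃ c : ℕ → Fin m, c 0 = j ∧
        ∃ dg : ℕ → EuclideanSpace ℝ (Fin d),
          (∀ n : ℕ, dg (n + 1) ∈ iterD (⇑Q) D k (c (n + 1)) (c n)) ∧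
          Tendsto (fun N : ℕ => ∑ n ∈ Finset.range N,
              ((Q.symm : EuclideanSpace ℝ (Fin d) →L[ℝ] EuclideanSpace ℝ (Fin d)) ^ ((n + 1) * k))
                (dg (n + 1)))
            atTop (nhds a) := by
  intro j a ha
  set T := (Q.symm : EuclideanSpace ℝ (Fin d) →L[ℝ] EuclideanSpace ℝ (Fin d)) ^ k
  obtain ⟨C, hC⟩ := (isCompact_iUnion hAcp).isBounded.exists_norm_le
  -- a state `(i, e, x)` is a colour, the digit leading into it, and a point `x ∈ A i`
  have hstep : ∀ p : Fin m × EuclideanSpace ℝ (Fin d) × EuclideanSpace ℝ (Fin d), p.2.2 ∈ A p.1 →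
      ∃ q : Fin m × _ × _, q.2.2 ∈ A q.1 ∧ q.2.1 ∈ iterD Q D k q.1 p.1 ∧ p.2.2 = T q.2.1 + T q.2.2 := by
    rintro ⟨i, _, x⟩ (hx : x ∈ A i)
    obtain ⟨i', e, he, x', hx', rfl⟩ :=
      exists_eq_symm_pow_apply_add Q D (fun j => (htile j).subset) k hx
    exact ⟨(i', e, x'), hx', he, map_add _ _ _⟩
  obtain ⟨s, hs0, hs⟩ := exists_seq_of_forall_exists hstep (a₀ := (j, 0, a)) ha
  refine ⟨fun n => (s n).1, congrArg Prod.fst hs0, fun n => (s n).2.1, fun n => (hs n).2.1, ?_⟩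
  have hlim := T.tendsto_sum_range_pow_apply hQk (x := fun n => (s n).2.2)
    (e := fun n => (s n).2.1) (fun n => hC _ (mem_iUnion.2 ⟨_, (hs n).1⟩)) (fun n => (hs n).2.2)
  simp only [hs0] at hlim
  simp_rw [pow_mul']
  exact hlim

/-- every point of a tile has a radix expansion in the iterated digit
sets: there are colours `i₀ = j, i₁, i₂, …` and digits `d_n ∈ (D^k)_{i_n i_{n-1}}`
with `a = Σ_{n≥1} Q^{-nk} d_n`. -/
theorem stmt_2 (d m k : ℕ) (hd : 1 ≤ d) (hm : 1 ≤ m) (hk : 1 ≤ k)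
    (Q : EuclideanSpace ℝ (Fin d) ≃L[ℝ] EuclideanSpace ℝ (Fin d))
    (hQk : ‖(Q.symm : EuclideanSpace ℝ (Fin d) →L[ℝ] EuclideanSpace ℝ (Fin d)) ^ k‖ < 1)
    (D : Fin m → Fin m → Set (EuclideanSpace ℝ (Fin d)))
    (hDfin : ∀ i j, (D i j).Finite)
    (A : Fin m → Set (EuclideanSpace ℝ (Fin d)))
    (hAne : ∀ i, (A i).Nonempty) (hAcp : ∀ i, IsCompact (A i))
    (htile : ∀ j, ⇑Q '' A j = ⋃ i, D i j + A i) :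
    ∀ j : Fin m, ∀ a ∈ A j,
      ∃ c : ℕ → Fin m, c 0 = j ∧
        ∃ dg : ℕ → EuclideanSpace ℝ (Fin d),
          (∀ n : ℕ, dg (n + 1) ∈ iterD (⇑Q) D k (c (n + 1)) (c n)) ∧
          Tendsto (fun N : ℕ => ∑ n ∈ Finset.range N,
              ((Q.symm : EuclideanSpace ℝ (Fin d) →L[ℝ] EuclideanSpace ℝ (Fin d)) ^ ((n + 1) * k))
                (dg (n + 1)))
            atTop (nhds a) :=
  stmt_2_general d m k Q hQk D A hAcp htile
end
end

section
/- All tiles of a tile-substitution are uniformly close to one another: for all i, j ≤ m and all a ∈ A_i, b ∈ A_j, one has |a − b| ≤ e^{(k)}·‖Q^{−k}‖/(1 − ‖Q^{−k}‖) = R. -/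
/-! Iterating the tile equation `k` times writes `Qᵏ b = x + b'` with `x` a level-`k` digit
and `b'` a point of some tile. Hence `Q⁻ᵏ` maps a difference of tile points to a difference of
digits plus a difference of tile points, so the diameter `S` of the union of the tiles satisfies
`S ≤ ‖Q⁻ᵏ‖ (e + S)`, which rearranges to `S ≤ R` because `‖Q⁻ᵏ‖ < 1`. -/

open Pointwise Set

noncomputable section

theorem iterD_finite {E : Type*} [AddCommGroup E] {m : ℕ} (Q : E → E)
    {D : Fin m → Fin m → Set E} (hD : ∀ i j, (D i j).Finite) (n : ℕ) (i j : Fin m) :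
    (iterD Q D n i j).Finite := by
  induction n generalizing i with
  | zero => by_cases h : i = j <;> simp [iterD, h]
  | succ n ih => exact finite_iUnion fun l => (hD i l).add ((ih l).image Q)

theorem exists_mem_iterD_iterate_eq_add {E F : Type*} [AddCommGroup E] [FunLike F E E]
    [AddMonoidHomClass F E E] {m : ℕ} (Q : F) {D : Fin m → Fin m → Set E} {A : Fin m → Set E}
    (htile : ∀ j, MapsTo Q (A j) (⋃ i, D i j + A i)) (n : ℕ) {j : Fin m} {b : E} (hb : b ∈ A j) :
    ∃ i, ∃ x ∈ iterD Q D n i j, ∃ b' ∈ A i, Q^[n] b = x + b' := by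
  induction n with
  | zero => exact ⟨j, 0, by simp [iterD], b, hb, by simp⟩
  | succ n ih =>
    obtain ⟨l, x, hx, b', hb', hQb⟩ := ih
    obtain ⟨i, hi⟩ := mem_iUnion.mp (htile l hb')
    obtain ⟨x₀, hx₀, b'', hb'', hQb'⟩ := mem_add.mp hi
    refine ⟨i, x₀ + Q x, mem_iUnion.mpr ⟨l, add_mem_add hx₀ (mem_image_of_mem _ hx)⟩,
      b'', hb'', ?_⟩
    rw [Function.iterate_succ_apply', hQb, map_add, ← hQb']
    abel

theorem norm_sub_le_sSup_iterD {E : Type*} [SeminormedAddCommGroup E] {m : ℕ} (Q : E → E)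
    {D : Fin m → Fin m → Set E} (hD : ∀ i j, (D i j).Finite) {n : ℕ} {i j i' j' : Fin m} {x y : E}
    (hx : x ∈ iterD Q D n i j) (hy : y ∈ iterD Q D n i' j') :
    ‖x - y‖ ≤ sSup {t : ℝ | ∃ i j i' j' : Fin m,
      ∃ x ∈ iterD Q D n i j, ∃ y ∈ iterD Q D n i' j', t = ‖x - y‖} := by
  have hU : (⋃ i, ⋃ j, iterD Q D n i j).Finite :=
    finite_iUnion fun i => finite_iUnion fun j => iterD_finite Q hD n i j
  refine le_csSup ((hU.image2 (fun x y => ‖x - y‖) hU).subset ?_).bddAbove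
    ⟨i, j, i', j', x, hx, y, hy, rfl⟩
  rintro t ⟨i, j, i', j', x, hx, y, hy, rfl⟩
  exact mem_image2_of_mem (mem_iUnion₂.mpr ⟨i, j, hx⟩) (mem_iUnion₂.mpr ⟨i', j', hy⟩)

theorem ContinuousLinearEquiv.norm_sub_le_norm_symm_pow_mul {𝕜 E : Type*}
    [NontriviallyNormedField 𝕜] [SeminormedAddCommGroup E] [NormedSpace 𝕜 E] (Q : E ≃L[𝕜] E)
    (k : ℕ) (u v : E) :
    ‖u - v‖ ≤ ‖(Q.symm : E →L[𝕜] E) ^ k‖ * ‖Q^[k] u - Q^[k] v‖ := by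
  have hinv : ∀ w, ((Q.symm : E →L[𝕜] E) ^ k) (Q^[k] w) = w := fun w => by
    rw [FunLike.coe_pow_eq_iterate]
    exact (Function.LeftInverse.iterate Q.symm_apply_apply k) w
  calc ‖u - v‖ = ‖((Q.symm : E →L[𝕜] E) ^ k) (Q^[k] u - Q^[k] v)‖ := by
        rw [ContinuousLinearMap.map_sub, hinv, hinv]
    _ ≤ _ := ContinuousLinearMap.le_opNorm _ _

theorem le_mul_div_one_sub_of_le_mul_add {S c e : ℝ} (hc : c < 1)
    (h : S ≤ c * (e + S)) : S ≤ e * c / (1 - c) := by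
  rw [le_div_iff₀ (by linarith)]
  nlinarith

theorem stmt_3_general (d m k : ℕ)
    (Q : EuclideanSpace ℝ (Fin d) ≃L[ℝ] EuclideanSpace ℝ (Fin d))
    (hQk : ‖(Q.symm : EuclideanSpace ℝ (Fin d) →L[ℝ] EuclideanSpace ℝ (Fin d)) ^ k‖ < 1)
    (D : Fin m → Fin m → Set (EuclideanSpace ℝ (Fin d)))
    (hDfin : ∀ i j, (D i j).Finite)
    (e : ℝ)
    (he : e = sSup {t : ℝ | ∃ i j i' j' : Fin m,
      ∃ x ∈ iterD (⇑Q) D k i j, ∃ y ∈ iterD (⇑Q) D k i' j', t = ‖x - y‖})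
    (R : ℝ)
    (hR : R = e * ‖(Q.symm : EuclideanSpace ℝ (Fin d) →L[ℝ] EuclideanSpace ℝ (Fin d)) ^ k‖ /
      (1 - ‖(Q.symm : EuclideanSpace ℝ (Fin d) →L[ℝ] EuclideanSpace ℝ (Fin d)) ^ k‖))
    (A : Fin m → Set (EuclideanSpace ℝ (Fin d)))
    (hAcp : ∀ i, IsCompact (A i))
    (htile : ∀ j, ⇑Q '' A j = ⋃ i, D i j + A i) :
    ∀ i j : Fin m, ∀ a ∈ A i, ∀ b ∈ A j, ‖a - b‖ ≤ R := by
  intro i j a ha b hb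
  set c := ‖(Q.symm : EuclideanSpace ℝ (Fin d) →L[ℝ] EuclideanSpace ℝ (Fin d)) ^ k‖
  set U := ⋃ i, A i
  have hU : Bornology.IsBounded U := (isCompact_iUnion hAcp).isBounded
  have hnorm_le_diam : ∀ {i j u v}, u ∈ A i → v ∈ A j → ‖u - v‖ ≤ Metric.diam U := by
    intro i j u v hu hv
    rw [← dist_eq_norm]
    exact Metric.dist_le_diam_of_mem hU (mem_iUnion_of_mem _ hu) (mem_iUnion_of_mem _ hv)
  have hmaps : ∀ j, MapsTo Q (A j) (⋃ i, D i j + A i) :=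
    fun j => mapsTo_iff_image_subset.mpr (htile j).subset
  have hdist : ∀ u ∈ U, ∀ v ∈ U, dist u v ≤ c * (e + Metric.diam U) := by
    intro u hu v hv
    obtain ⟨i, hu⟩ := mem_iUnion.mp hu
    obtain ⟨j, hv⟩ := mem_iUnion.mp hv
    obtain ⟨i', x, hx, u', hu', hQu⟩ := exists_mem_iterD_iterate_eq_add Q hmaps k hu
    obtain ⟨j', y, hy, v', hv', hQv⟩ := exists_mem_iterD_iterate_eq_add Q hmaps k hv
    have hxy : ‖x - y‖ ≤ e := he ▸ norm_sub_le_sSup_iterD Q hDfin hx hy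
    calc dist u v ≤ c * ‖Q^[k] u - Q^[k] v‖ :=
          dist_eq_norm u v ▸ Q.norm_sub_le_norm_symm_pow_mul k u v
      _ = c * ‖(x - y) + (u' - v')‖ := by rw [hQu, hQv, add_sub_add_comm]
      _ ≤ c * (e + Metric.diam U) := by
          gcongr
          exact (norm_add_le _ _).trans (add_le_add hxy (hnorm_le_diam hu' hv'))
  have hdiam := Metric.diam_le_of_forall_dist_le_of_nonempty ⟨a, mem_iUnion_of_mem i ha⟩ hdist
  exact (hnorm_le_diam ha hb).trans (hR ▸ le_mul_div_one_sub_of_le_mul_add hQk hdiam)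

/-- all tiles are uniformly close to one another:
`|a − b| ≤ e^{(k)}·‖Q^{−k}‖/(1 − ‖Q^{−k}‖) = R` for all `a ∈ A_i`, `b ∈ A_j`. -/
theorem stmt_3 (d m k : ℕ) (hd : 1 ≤ d) (hm : 1 ≤ m) (hk : 1 ≤ k)
    (Q : EuclideanSpace ℝ (Fin d) ≃L[ℝ] EuclideanSpace ℝ (Fin d))
    (hQk : ‖(Q.symm : EuclideanSpace ℝ (Fin d) →L[ℝ] EuclideanSpace ℝ (Fin d)) ^ k‖ < 1)
    (D : Fin m → Fin m → Set (EuclideanSpace ℝ (Fin d)))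
    (hDfin : ∀ i j, (D i j).Finite)
    (e : ℝ)
    (he : e = sSup {t : ℝ | ∃ i j i' j' : Fin m,
      ∃ x ∈ iterD (⇑Q) D k i j, ∃ y ∈ iterD (⇑Q) D k i' j', t = ‖x - y‖})
    (R : ℝ)
    (hR : R = e * ‖(Q.symm : EuclideanSpace ℝ (Fin d) →L[ℝ] EuclideanSpace ℝ (Fin d)) ^ k‖ /
      (1 - ‖(Q.symm : EuclideanSpace ℝ (Fin d) →L[ℝ] EuclideanSpace ℝ (Fin d)) ^ k‖))
    (A : Fin m → Set (EuclideanSpace ℝ (Fin d)))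
    (hAne : ∀ i, (A i).Nonempty) (hAcp : ∀ i, IsCompact (A i))
    (htile : ∀ j, ⇑Q '' A j = ⋃ i, D i j + A i) :
    ∀ i j : Fin m, ∀ a ∈ A i, ∀ b ∈ A j, ‖a - b‖ ≤ R :=
  stmt_3_general d m k Q hQk D hDfin e he R hR A hAcp htile
end
end

section
/- Separation propagates under inflation: let α_max > 0. If y, z ∈ ℝ^d satisfy |y − z| > R + ‖Q^{−k}‖·α_max, then for all digits d₁, d₂ ∈ ⋃_{i,j ≤ m} (D^k)_{ij} one has |(Q^k y + d₁) − (Q^k z + d₂)| > R + α_max; in particular the distance still exceeds R + ‖Q^{−k}‖·α_max. -/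
/-!
Since `‖y - z‖ ≤ ‖Q^{-k}‖ ‖Q^k y - Q^k z‖` and `R = ‖Q^{-k}‖ (R + e)`, the hypothesis forces
`‖Q^k y - Q^k z‖ > R + e + α_max`; any two digits lie within `e` of each other, so adding them
loses at most `e`.
-/

open Pointwise Set

noncomputable section

theorem norm_sub_le_sSup_of_mem_iUnion₂ {E ι κ : Type*} [SeminormedAddCommGroup E]
    [Finite ι] [Finite κ] {T : ι → κ → Set E} (hT : ∀ i j, (T i j).Finite) {x y : E}
    (hx : x ∈ ⋃ i, ⋃ j, T i j) (hy : y ∈ ⋃ i, ⋃ j, T i j) :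
    ‖x - y‖ ≤ sSup {t : ℝ | ∃ i j i' j', ∃ x ∈ T i j, ∃ y ∈ T i' j', t = ‖x - y‖} := by
  have hU : (⋃ i, ⋃ j, T i j).Finite := finite_iUnion fun i => finite_iUnion (hT i)
  have hbdd : BddAbove {t : ℝ | ∃ i j i' j', ∃ x ∈ T i j, ∃ y ∈ T i' j', t = ‖x - y‖} := by
    refine (((hU.prod hU).image fun p : E × E => ‖p.1 - p.2‖).subset ?_).bddAbove
    rintro t ⟨i, j, i', j', x, hx, y, hy, rfl⟩
    exact ⟨(x, y), ⟨mem_iUnion₂.2 ⟨i, j, hx⟩, mem_iUnion₂.2 ⟨i', j', hy⟩⟩, rfl⟩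
  obtain ⟨i, j, hx⟩ := mem_iUnion₂.1 hx
  obtain ⟨i', j', hy⟩ := mem_iUnion₂.1 hy
  exact le_csSup hbdd ⟨i, j, i', j', x, hx, y, hy, rfl⟩

theorem ContinuousLinearEquiv.norm_le_norm_symm_pow_mul_norm_iterate {𝕜 E : Type*}
    [NontriviallyNormedField 𝕜] [SeminormedAddCommGroup E] [NormedSpace 𝕜 E]
    (Q : E ≃L[𝕜] E) (k : ℕ) (v : E) :
    ‖v‖ ≤ ‖(Q.symm : E →L[𝕜] E) ^ k‖ * ‖(⇑Q)^[k] v‖ := by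
  have hinv : ((Q.symm : E →L[𝕜] E) ^ k) ((⇑Q)^[k] v) = v := by
    rw [FunLike.coe_pow_eq_iterate]
    exact (Function.LeftInverse.iterate Q.symm_apply_apply k) v
  calc ‖v‖ = ‖((Q.symm : E →L[𝕜] E) ^ k) ((⇑Q)^[k] v)‖ := by rw [hinv]
    _ ≤ _ := ContinuousLinearMap.le_opNorm _ _

theorem stmt_7_general (d m k : ℕ)
    (Q : EuclideanSpace ℝ (Fin d) ≃L[ℝ] EuclideanSpace ℝ (Fin d))
    (hQk : ‖(Q.symm : EuclideanSpace ℝ (Fin d) →L[ℝ] EuclideanSpace ℝ (Fin d)) ^ k‖ < 1)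
    (D : Fin m → Fin m → Set (EuclideanSpace ℝ (Fin d)))
    (hDfin : ∀ i j, (D i j).Finite)
    (e : ℝ)
    (he : e = sSup {t : ℝ | ∃ i j i' j' : Fin m,
      ∃ x ∈ iterD (⇑Q) D k i j, ∃ y ∈ iterD (⇑Q) D k i' j', t = ‖x - y‖})
    (R : ℝ)
    (hR : R = e * ‖(Q.symm : EuclideanSpace ℝ (Fin d) →L[ℝ] EuclideanSpace ℝ (Fin d)) ^ k‖ /
      (1 - ‖(Q.symm : EuclideanSpace ℝ (Fin d) →L[ℝ] EuclideanSpace ℝ (Fin d)) ^ k‖))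
    (αmax : ℝ) (hα : 0 < αmax)
    (y z : EuclideanSpace ℝ (Fin d))
    (hyz : R + ‖(Q.symm : EuclideanSpace ℝ (Fin d) →L[ℝ] EuclideanSpace ℝ (Fin d)) ^ k‖ * αmax
      < ‖y - z‖) :
    ∀ d₁ ∈ ⋃ i, ⋃ j, iterD (⇑Q) D k i j, ∀ d₂ ∈ ⋃ i, ⋃ j, iterD (⇑Q) D k i j,
      R + αmax < ‖((⇑Q)^[k] y + d₁) - ((⇑Q)^[k] z + d₂)‖ ∧
      R + ‖(Q.symm : EuclideanSpace ℝ (Fin d) →L[ℝ] EuclideanSpace ℝ (Fin d)) ^ k‖ * αmax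
        < ‖((⇑Q)^[k] y + d₁) - ((⇑Q)^[k] z + d₂)‖ := by
  intro d₁ hd₁ d₂ hd₂
  set N := ‖(Q.symm : EuclideanSpace ℝ (Fin d) →L[ℝ] EuclideanSpace ℝ (Fin d)) ^ k‖
  have hdigits : ‖d₁ - d₂‖ ≤ e :=
    he ▸ norm_sub_le_sSup_of_mem_iUnion₂ (iterD_finite Q hDfin k) hd₁ hd₂
  have hR' : R = N * (R + e) := by
    have : 1 - N ≠ 0 := by linarith
    rw [hR]; field_simp; ring
  have hstretch : R + e + αmax < ‖(⇑Q)^[k] y - (⇑Q)^[k] z‖ := by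
    refine lt_of_mul_lt_mul_left ?_ (norm_nonneg _ : 0 ≤ N)
    calc N * (R + e + αmax) = R + N * αmax := by linear_combination -hR'
      _ < ‖y - z‖ := hyz
      _ ≤ N * ‖(⇑Q)^[k] y - (⇑Q)^[k] z‖ := by
        rw [← iterate_map_sub]; exact Q.norm_le_norm_symm_pow_mul_norm_iterate k (y - z)
  have hsep : R + αmax < ‖((⇑Q)^[k] y + d₁) - ((⇑Q)^[k] z + d₂)‖ := by
    rw [show ((⇑Q)^[k] y + d₁) - ((⇑Q)^[k] z + d₂)
        = ((⇑Q)^[k] y - (⇑Q)^[k] z) - (d₂ - d₁) by abel]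
    linarith [norm_sub_norm_le ((⇑Q)^[k] y - (⇑Q)^[k] z) (d₂ - d₁), norm_sub_rev d₁ d₂]
  exact ⟨hsep, by linarith [mul_le_of_le_one_left hα.le hQk.le]⟩

/-- separation propagates under inflation: if `|y − z| > R + ‖Q^{−k}‖·α_max`,
then for all digits `d₁, d₂ ∈ ⋃_{i,j}(D^k)_{ij}`,
`|(Q^k y + d₁) − (Q^k z + d₂)| > R + α_max > R + ‖Q^{−k}‖·α_max`. -/
theorem stmt_7 (d m k : ℕ) (hd : 1 ≤ d) (hm : 1 ≤ m) (hk : 1 ≤ k)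
    (Q : EuclideanSpace ℝ (Fin d) ≃L[ℝ] EuclideanSpace ℝ (Fin d))
    (hQk : ‖(Q.symm : EuclideanSpace ℝ (Fin d) →L[ℝ] EuclideanSpace ℝ (Fin d)) ^ k‖ < 1)
    (D : Fin m → Fin m → Set (EuclideanSpace ℝ (Fin d)))
    (hDfin : ∀ i j, (D i j).Finite)
    (e : ℝ)
    (he : e = sSup {t : ℝ | ∃ i j i' j' : Fin m,
      ∃ x ∈ iterD (⇑Q) D k i j, ∃ y ∈ iterD (⇑Q) D k i' j', t = ‖x - y‖})
    (R : ℝ)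
    (hR : R = e * ‖(Q.symm : EuclideanSpace ℝ (Fin d) →L[ℝ] EuclideanSpace ℝ (Fin d)) ^ k‖ /
      (1 - ‖(Q.symm : EuclideanSpace ℝ (Fin d) →L[ℝ] EuclideanSpace ℝ (Fin d)) ^ k‖))
    (αmax : ℝ) (hα : 0 < αmax)
    (y z : EuclideanSpace ℝ (Fin d))
    (hyz : R + ‖(Q.symm : EuclideanSpace ℝ (Fin d) →L[ℝ] EuclideanSpace ℝ (Fin d)) ^ k‖ * αmax
      < ‖y - z‖) :
    ∀ d₁ ∈ ⋃ i, ⋃ j, iterD (⇑Q) D k i j, ∀ d₂ ∈ ⋃ i, ⋃ j, iterD (⇑Q) D k i j,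
      R + αmax < ‖((⇑Q)^[k] y + d₁) - ((⇑Q)^[k] z + d₂)‖ ∧
      R + ‖(Q.symm : EuclideanSpace ℝ (Fin d) →L[ℝ] EuclideanSpace ℝ (Fin d)) ^ k‖ * αmax
        < ‖((⇑Q)^[k] y + d₁) - ((⇑Q)^[k] z + d₂)‖ :=
  stmt_7_general d m k Q hQk D hDfin e he R hR αmax hα y z hyz
end
end

section
/- Stabilization of two-point cluster classes detects all of Λ: if 𝒥(Φ^N(ξ)) = 𝒥(Φ^{N+k}(ξ)) for some N ≥ 1, then 𝒥(Φ^N(ξ)) = 𝒥(Λ). -/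
open Pointwise Set

noncomputable section

def UniformlyDiscrete {X : Type*} [PseudoMetricSpace X] (S : Set X) : Prop :=
  ∃ r > 0, ∀ x ∈ S, ∀ y ∈ S, x ≠ y → r ≤ dist x y

def RelativelyDense {X : Type*} [PseudoMetricSpace X] (S : Set X) : Prop :=
  ∃ R > 0, ∀ x : X, ∃ y ∈ S, dist x y ≤ R

def IsDelone {X : Type*} [PseudoMetricSpace X] (S : Set X) : Prop :=
  UniformlyDiscrete S ∧ RelativelyDense S

section MyAux

variable {E : Type*} [AddCommGroup E] {m : ℕ}

lemma myIter_add (Q : E → E) (hQ : ∀ x y, Q (x + y) = Q x + Q y) :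
    ∀ (n : ℕ) (x y : E), Q^[n] (x + y) = Q^[n] x + Q^[n] y := by
  intro n
  induction n with
  | zero => intro x y; simp
  | succ n ih =>
    intro x y
    rw [Function.iterate_succ_apply', Function.iterate_succ_apply',
      Function.iterate_succ_apply', ih, hQ]

lemma myIterD_add_mem (Q : E → E) (hQ : ∀ x y, Q (x + y) = Q x + Q y)
    (D : Fin m → Fin m → Set E) :
    ∀ (k n : ℕ) (i l j : Fin m) (a : E), a ∈ iterD Q D k i l →
      ∀ y ∈ iterD Q D n l j, a + Q^[k] y ∈ iterD Q D (n + k) i j := by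
  intro k
  induction k with
  | zero =>
    intro n i l j a ha y hy
    by_cases h : i = l
    · subst h
      simp only [iterD, if_pos rfl, Set.mem_singleton_iff] at ha
      subst ha
      simpa using hy
    · simp [iterD, h] at ha
  | succ k ih =>
    intro n i l j a ha y hy
    simp only [iterD, Set.mem_iUnion, Set.mem_add] at ha
    obtain ⟨l₁, x, hx, w, ⟨b, hb, rfl⟩, rfl⟩ := ha
    rw [show n + (k + 1) = (n + k) + 1 by omega]
    simp only [iterD, Set.mem_iUnion, Set.mem_add]
    refine ⟨l₁, x, hx, Q (b + Q^[k] y), ⟨b + Q^[k] y, ih n l₁ l j b hb y hy, rfl⟩, ?_⟩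
    rw [hQ, Function.iterate_succ_apply']
    abel

lemma myIterD_decomp (Q : E → E) (hQ : ∀ x y, Q (x + y) = Q x + Q y)
    (D : Fin m → Fin m → Set E) :
    ∀ (k n : ℕ) (i j : Fin m) (y : E), y ∈ iterD Q D (n + k) i j →
      ∃ l a y', a ∈ iterD Q D k i l ∧ y' ∈ iterD Q D n l j ∧ y = a + Q^[k] y' := by
  intro k
  induction k with
  | zero =>
    intro n i j y hy
    exact ⟨i, 0, y, by simp [iterD], hy, by simp⟩
  | succ k ih =>
    intro n i j y hy
    rw [show n + (k + 1) = (n + k) + 1 by omega] at hy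
    simp only [iterD, Set.mem_iUnion, Set.mem_add] at hy
    obtain ⟨l₁, x, hx, w, ⟨b, hb, rfl⟩, rfl⟩ := hy
    obtain ⟨l, a, y', ha, hy', rfl⟩ := ih n l₁ j b hb
    refine ⟨l, x + Q a, y', ?_, hy', ?_⟩
    · simp only [iterD, Set.mem_iUnion, Set.mem_add]
      exact ⟨l₁, x, hx, Q a, ⟨a, ha, rfl⟩, rfl⟩
    · rw [hQ, Function.iterate_succ_apply']
      abel

lemma myIterD_finite (Q : E → E) (D : Fin m → Fin m → Set E)
    (hD : ∀ i j, (D i j).Finite) : ∀ (n : ℕ) (i j : Fin m), (iterD Q D n i j).Finite := by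
  intro n
  induction n with
  | zero =>
    intro i j
    by_cases h : i = j <;> simp [iterD, h]
  | succ n ih =>
    intro i j
    simp only [iterD]
    exact Set.finite_iUnion fun l => (hD i l).add ((ih l j).image Q)

lemma myDigitSet_finite {E : Type*} [SeminormedAddCommGroup E] {m : ℕ} (Q : E → E)
    (D : Fin m → Fin m → Set E) (hD : ∀ i j, (D i j).Finite) (k : ℕ) :
    {t : ℝ | ∃ i j i' j' : Fin m,
      ∃ x ∈ iterD Q D k i j, ∃ y ∈ iterD Q D k i' j', t = ‖x - y‖}.Finite := by
  have hIfin := myIterD_finite Q D hD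
  apply Set.Finite.subset (Set.finite_iUnion fun i : Fin m =>
    Set.finite_iUnion fun j : Fin m => Set.finite_iUnion fun i' : Fin m =>
    Set.finite_iUnion fun j' : Fin m =>
    (((hIfin k i j).prod (hIfin k i' j')).image (fun p : E × E => ‖p.1 - p.2‖)))
  rintro t ⟨i, j, i', j', x, hx, y, hy, rfl⟩
  simp only [Set.mem_iUnion]
  exact ⟨i, j, i', j', Set.mem_image_of_mem _ (Set.mk_mem_prod hx hy)⟩

end MyAux

set_option maxHeartbeats 2000000 in
/-- stabilization of two-point cluster classes detects all of `Λ`: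
if `𝒥(Φ^N(ξ)) = 𝒥(Φ^{N+k}(ξ))` for some `N ≥ 1`, then `𝒥(Φ^N(ξ)) = 𝒥(Λ)`. -/
theorem stmt_8 (d m : ℕ) (hd : 1 ≤ d) (hm : 1 ≤ m)
    (Q : EuclideanSpace ℝ (Fin d) ≃L[ℝ] EuclideanSpace ℝ (Fin d))
    (D : Fin m → Fin m → Set (EuclideanSpace ℝ (Fin d)))
    (hDfin : ∀ i j, (D i j).Finite)
    (k : ℕ) (hk : 1 ≤ k)
    (hQk : ‖(Q.symm : EuclideanSpace ℝ (Fin d) →L[ℝ] EuclideanSpace ℝ (Fin d)) ^ k‖ < 1)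
    (e : ℝ)
    (he : e = sSup {t : ℝ | ∃ i j i' j' : Fin m,
      ∃ x ∈ iterD (⇑Q) D k i j, ∃ y ∈ iterD (⇑Q) D k i' j', t = ‖x - y‖})
    (R : ℝ)
    (hR : R = e * ‖(Q.symm : EuclideanSpace ℝ (Fin d) →L[ℝ] EuclideanSpace ℝ (Fin d)) ^ k‖ /
      (1 - ‖(Q.symm : EuclideanSpace ℝ (Fin d) →L[ℝ] EuclideanSpace ℝ (Fin d)) ^ k‖))
    (Λ : Fin m → Set (EuclideanSpace ℝ (Fin d)))
    (hDel : ∀ i, IsDelone (Λ i)) (hDelU : IsDelone (⋃ i, Λ i))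
    (hsub : ∀ i, Λ i = ⋃ j, ⇑Q '' Λ j + D i j)
    (hdisj : ∀ i : Fin m, ∀ j j' : Fin m, ∀ x ∈ D i j, ∀ x' ∈ D i j',
      (j, x) ≠ (j', x') → Disjoint (x +ᵥ ⇑Q '' Λ j) (x' +ᵥ ⇑Q '' Λ j'))
    (j₀ : Fin m) (ξ : EuclideanSpace ℝ (Fin d)) (hξ : ξ ∈ Λ j₀)
    (d₀ : EuclideanSpace ℝ (Fin d)) (hd₀ : d₀ ∈ D j₀ j₀) (hfix : ξ = Q ξ + d₀)
    (Phi : ℕ → Fin m → Set (EuclideanSpace ℝ (Fin d)))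
    (hPhi : ∀ n i, Phi n i = (⇑Q)^[n] ξ +ᵥ iterD (⇑Q) D n i j₀)
    (hgen : ∀ i, Λ i = ⋃ n : ℕ, Phi n i)
    (αmax : ℝ) (hα : 0 < αmax)
    (J : (Fin m → Set (EuclideanSpace ℝ (Fin d))) →
      Set (Fin m × EuclideanSpace ℝ (Fin d) × Fin m))
    (hJ : ∀ G, J G = { t | ∃ i j, ∃ y ∈ G i, ∃ z ∈ G j,
      t = (i, y - z, j) ∧ ‖y - z‖ <
        R + ‖(Q.symm : EuclideanSpace ℝ (Fin d) →L[ℝ] EuclideanSpace ℝ (Fin d)) ^ k‖ * αmax })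
    (N : ℕ) (hN : 1 ≤ N)
    (hstab : J (Phi N) = J (Phi (N + k))) :
    J (Phi N) = J Λ := by
  set lam := ‖(Q.symm : EuclideanSpace ℝ (Fin d) →L[ℝ] EuclideanSpace ℝ (Fin d)) ^ k‖
    with hlamdef
  have hQadd : ∀ x y : EuclideanSpace ℝ (Fin d), Q (x + y) = Q x + Q y := map_add Q
  have hIadd := myIter_add (⇑Q) hQadd
  have hpow : ∀ (n : ℕ) (x : EuclideanSpace ℝ (Fin d)),
      ((Q : EuclideanSpace ℝ (Fin d) →L[ℝ] EuclideanSpace ℝ (Fin d)) ^ n) x = (⇑Q)^[n] x := by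
    intro n
    induction n with
    | zero => intro x; simp
    | succ n ih =>
      intro x
      rw [pow_succ', ContinuousLinearMap.mul_apply, ih, Function.iterate_succ_apply']
      simp
  have hIsub : ∀ (n : ℕ) (x y : EuclideanSpace ℝ (Fin d)),
      (⇑Q)^[n] (x - y) = (⇑Q)^[n] x - (⇑Q)^[n] y := by
    intro n x y
    rw [← hpow n, ← hpow n, ← hpow n, map_sub]
  have hinv : ∀ (n : ℕ) (v : EuclideanSpace ℝ (Fin d)),
      ((Q.symm : EuclideanSpace ℝ (Fin d) →L[ℝ] EuclideanSpace ℝ (Fin d)) ^ n)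
        ((⇑Q)^[n] v) = v := by
    intro n
    induction n with
    | zero => intro v; simp
    | succ n ih =>
      intro v
      rw [pow_succ, ContinuousLinearMap.mul_apply, Function.iterate_succ_apply']
      have h1 : (Q.symm : EuclideanSpace ℝ (Fin d) →L[ℝ] EuclideanSpace ℝ (Fin d))
          (Q ((⇑Q)^[n] v)) = (⇑Q)^[n] v := by simp
      rw [h1]
      exact ih v
  have hnorm : ∀ v : EuclideanSpace ℝ (Fin d), ‖v‖ ≤ lam * ‖(⇑Q)^[k] v‖ := by
    intro v
    conv_lhs => rw [← hinv k v]
    exact ContinuousLinearMap.le_opNorm _ _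
  have hlam0 : (0 : ℝ) ≤ lam := norm_nonneg _
  haveI : Nonempty (Fin d) := ⟨⟨0, hd⟩⟩
  have hlampos : (0 : ℝ) < lam := by
    rcases hlam0.lt_or_eq with h | h
    · exact h
    · exfalso
      rcases exists_ne (0 : EuclideanSpace ℝ (Fin d)) with ⟨x, hx⟩
      have h1 : ‖x‖ ≤ (0 : ℝ) := by
        have := hnorm x
        rw [← h] at this
        simpa using this
      exact hx (norm_le_zero_iff.mp h1)
  -- digit bound
  have hIfin := myIterD_finite (⇑Q) D hDfin
  have hE : ∀ (i j i' j' : Fin m), ∀ x ∈ iterD (⇑Q) D k i j, ∀ y ∈ iterD (⇑Q) D k i' j',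
      ‖x - y‖ ≤ e := by
    intro i j i' j' x hx y hy
    have hfin := myDigitSet_finite (⇑Q) D hDfin k
    rw [he]
    exact le_csSup hfin.bddAbove ⟨i, j, i', j', x, hx, y, hy, rfl⟩
  -- arithmetic
  have hne : (1 : ℝ) - lam ≠ 0 := by linarith
  have hkey : lam * R + lam * e = R := by
    rw [hR]
    field_simp
    ring
  have harith : lam * ((R + lam * αmax) + e) ≤ R + lam * αmax := by
    have h2 : lam * (lam * αmax) ≤ lam * αmax := by
      nlinarith [mul_nonneg (by linarith : (0:ℝ) ≤ 1 - lam) (mul_nonneg hlam0 hα.le)]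
    nlinarith [hkey, h2]
  -- Phi membership
  have hPhiMem : ∀ (n : ℕ) (i : Fin m) (y : EuclideanSpace ℝ (Fin d)),
      y ∈ Phi n i ↔ ∃ b ∈ iterD (⇑Q) D n i j₀, y = (⇑Q)^[n] ξ + b := by
    intro n i y
    rw [hPhi]
    constructor
    · intro h
      rw [Set.mem_vadd_set] at h
      obtain ⟨b, hb, hby⟩ := h
      exact ⟨b, hb, by rw [← hby, vadd_eq_add]⟩
    · rintro ⟨b, hb, rfl⟩
      show (⇑Q)^[n] ξ +ᵥ b ∈ (⇑Q)^[n] ξ +ᵥ iterD (⇑Q) D n i j₀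
      exact Set.vadd_mem_vadd_set hb
  have hcomp : ∀ (n : ℕ) (i l : Fin m) (a y' : EuclideanSpace ℝ (Fin d)),
      a ∈ iterD (⇑Q) D k i l → y' ∈ Phi n l → a + (⇑Q)^[k] y' ∈ Phi (n + k) i := by
    intro n i l a y' ha hy'
    obtain ⟨b, hb, rfl⟩ := (hPhiMem n l y').mp hy'
    have hmem := myIterD_add_mem (⇑Q) hQadd D k n i l j₀ a ha b hb
    refine (hPhiMem (n + k) i _).mpr ⟨a + (⇑Q)^[k] b, hmem, ?_⟩
    rw [hIadd]
    have hit : (⇑Q)^[n + k] ξ = (⇑Q)^[k] ((⇑Q)^[n] ξ) := by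
      rw [add_comm, Function.iterate_add_apply]
    rw [hit]
    abel
  have hdecompPhi : ∀ (n : ℕ) (i : Fin m) (y : EuclideanSpace ℝ (Fin d)), y ∈ Phi (n + k) i →
      ∃ l a y', a ∈ iterD (⇑Q) D k i l ∧ y' ∈ Phi n l ∧ y = a + (⇑Q)^[k] y' := by
    intro n i y hy
    obtain ⟨b, hb, rfl⟩ := (hPhiMem (n + k) i y).mp hy
    obtain ⟨l, a, y', ha, hy', rfl⟩ := myIterD_decomp (⇑Q) hQadd D k n i j₀ b hb
    refine ⟨l, a, (⇑Q)^[n] ξ + y', ha, (hPhiMem n l _).mpr ⟨y', hy', rfl⟩, ?_⟩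
    rw [hIadd]
    have hit : (⇑Q)^[n + k] ξ = (⇑Q)^[k] ((⇑Q)^[n] ξ) := by
      rw [add_comm, Function.iterate_add_apply]
    rw [hit]
    abel
  -- monotonicity
  have hd₀1 : d₀ ∈ iterD (⇑Q) D 1 j₀ j₀ := by
    simp only [iterD, Set.mem_iUnion, Set.mem_add]
    refine ⟨j₀, d₀, hd₀, Q 0, ⟨0, ?_, rfl⟩, by simp⟩
    simp [iterD]
  have hmono : ∀ (n : ℕ) (i : Fin m), Phi n i ⊆ Phi (n + 1) i := by
    intro n i y hy
    obtain ⟨b, hb, rfl⟩ := (hPhiMem n i _).mp hy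
    have hmem := myIterD_add_mem (⇑Q) hQadd D n 1 i j₀ j₀ b hb d₀ hd₀1
    rw [show 1 + n = n + 1 by omega] at hmem
    refine (hPhiMem (n + 1) i _).mpr ⟨b + (⇑Q)^[n] d₀, hmem, ?_⟩
    have h1 : (⇑Q)^[n] ξ = (⇑Q)^[n + 1] ξ + (⇑Q)^[n] d₀ := by
      conv_lhs => rw [hfix]
      rw [hIadd, ← Function.iterate_succ_apply]
    rw [h1]
    abel
  have hmonoLe : ∀ {n n' : ℕ}, n ≤ n' → ∀ i, Phi n i ⊆ Phi n' i := by
    intro n n' h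
    induction h with
    | refl => intro i; exact subset_rfl
    | step h ih => intro i; exact (ih i).trans (hmono _ i)
  have hJmono : ∀ G G' : Fin m → Set (EuclideanSpace ℝ (Fin d)),
      (∀ i, G i ⊆ G' i) → J G ⊆ J G' := by
    intro G G' h t ht
    rw [hJ] at ht ⊢
    obtain ⟨i, j, y, hy, z, hz, rfl, hlt⟩ := ht
    exact ⟨i, j, y, h i hy, z, h j hz, rfl, hlt⟩
  -- key step
  have hkeystep : ∀ n₁ n₂ : ℕ, J (Phi n₁) ⊆ J (Phi n₂) →
      J (Phi (n₁ + k)) ⊆ J (Phi (n₂ + k)) := by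
    intro n₁ n₂ hss t ht
    rw [hJ] at ht
    obtain ⟨i, j, y, hy, z, hz, rfl, hlt⟩ := ht
    obtain ⟨l, a, y', ha, hy', rfl⟩ := hdecompPhi n₁ i y hy
    obtain ⟨l', b, z', hb, hz', rfl⟩ := hdecompPhi n₁ j z hz
    have hab : ‖a - b‖ ≤ e := hE i l j l' a ha b hb
    have hyz' : ‖y' - z'‖ < R + lam * αmax := by
      have h1 : ‖y' - z'‖ ≤ lam * ‖(⇑Q)^[k] (y' - z')‖ := hnorm _
      have h2 : (⇑Q)^[k] (y' - z') =
          (a + (⇑Q)^[k] y' - (b + (⇑Q)^[k] z')) - (a - b) := by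
        rw [hIsub]
        abel
      have h3 : ‖(⇑Q)^[k] (y' - z')‖ ≤
          ‖a + (⇑Q)^[k] y' - (b + (⇑Q)^[k] z')‖ + ‖a - b‖ := by
        rw [h2]
        exact norm_sub_le _ _
      have h4 : lam * ‖(⇑Q)^[k] (y' - z')‖ < lam * ((R + lam * αmax) + e) := by
        apply mul_lt_mul_of_pos_left _ hlampos
        calc ‖(⇑Q)^[k] (y' - z')‖
            ≤ ‖a + (⇑Q)^[k] y' - (b + (⇑Q)^[k] z')‖ + ‖a - b‖ := h3
          _ < (R + lam * αmax) + e := add_lt_add_of_lt_of_le hlt hab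
      linarith
    have hmem : (l, y' - z', l') ∈ J (Phi n₁) := by
      rw [hJ]
      exact ⟨l, l', y', hy', z', hz', rfl, hyz'⟩
    have hmem2 := hss hmem
    rw [hJ] at hmem2
    obtain ⟨l₂, l₂', y'', hy'', z'', hz'', heq, -⟩ := hmem2
    obtain ⟨h1, h2, h3⟩ : l = l₂ ∧ y' - z' = y'' - z'' ∧ l' = l₂' := by
      simpa [Prod.ext_iff] using heq
    subst h1
    subst h3
    have e3 : (⇑Q)^[k] y' - (⇑Q)^[k] z' = (⇑Q)^[k] y'' - (⇑Q)^[k] z'' := by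
      rw [← hIsub, ← hIsub, h2]
    have hswap : a + (⇑Q)^[k] y' - (b + (⇑Q)^[k] z') =
        a + (⇑Q)^[k] y'' - (b + (⇑Q)^[k] z'') := by
      calc a + (⇑Q)^[k] y' - (b + (⇑Q)^[k] z')
          = ((⇑Q)^[k] y' - (⇑Q)^[k] z') + (a - b) := by abel
        _ = ((⇑Q)^[k] y'' - (⇑Q)^[k] z'') + (a - b) := by rw [e3]
        _ = a + (⇑Q)^[k] y'' - (b + (⇑Q)^[k] z'') := by abel
    rw [hJ]
    refine ⟨i, j, a + (⇑Q)^[k] y'', hcomp n₂ i l a y'' ha hy'',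
      b + (⇑Q)^[k] z'', hcomp n₂ j l' b z'' hb hz'', ?_, ?_⟩
    · rw [← hswap]
    · rw [← hswap]
      exact hlt
  -- periodicity
  have hperiod : ∀ t : ℕ, J (Phi (N + t * k)) = J (Phi N) := by
    intro t
    induction t with
    | zero => simp
    | succ t ih =>
      have hidx : N + (t + 1) * k = (N + t * k) + k := by ring
      rw [hidx]
      exact (Set.Subset.antisymm (hkeystep _ _ ih.le) (hkeystep _ _ ih.ge)).trans hstab.symm
  have hall : ∀ n : ℕ, J (Phi n) ⊆ J (Phi N) := by
    intro n
    have hle : n ≤ N + n * k := by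
      calc n = n * 1 := (mul_one n).symm
        _ ≤ n * k := Nat.mul_le_mul_left n hk
        _ ≤ N + n * k := Nat.le_add_left _ _
    calc J (Phi n) ⊆ J (Phi (N + n * k)) := hJmono _ _ fun i => hmonoLe hle i
      _ = J (Phi N) := hperiod n
  -- conclusion
  apply Set.Subset.antisymm
  · exact hJmono _ _ fun i => by
      rw [hgen i]
      exact Set.subset_iUnion (fun n => Phi n i) N
  · intro t ht
    rw [hJ] at ht
    obtain ⟨i, j, y, hy, z, hz, rfl, hlt⟩ := ht
    rw [hgen i] at hy
    rw [hgen j] at hz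
    obtain ⟨n₁, hy⟩ := Set.mem_iUnion.mp hy
    obtain ⟨n₂, hz⟩ := Set.mem_iUnion.mp hz
    apply hall (max n₁ n₂)
    rw [hJ]
    exact ⟨i, j, y, hmonoLe (le_max_left _ _) i hy, z, hmonoLe (le_max_right _ _) j hz,
      rfl, hlt⟩
end
end

section
/- All potential-overlap classes for a translation α appear in a fixed iterate: assume 𝒥(Φ^N(ξ)) = 𝒥(Λ) for some N ≥ 1. Then for every α ∈ ℝ^d with |α| ≤ α_max and all i, j ≤ m, u ∈ Λ_i, v ∈ Λ_j with |u − α − v| < R, there exist y ∈ (Φ^{N+k}(ξ))_i and z ∈ (Φ^{N+k}(ξ))_j such that y − z = u − v. -/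
open Pointwise Set

noncomputable section

section AdditiveSubstitution

variable {E F : Type*} [AddCommGroup E] [FunLike F E E] [AddMonoidHomClass F E E] {m : ℕ}
  (Q : F) (D : Fin m → Fin m → Set E)

theorem add_iterate_mem_iterD {a b : ℕ} {i l j : Fin m} {x y : E}
    (hx : x ∈ iterD Q D a i l) (hy : y ∈ iterD Q D b l j) :
    x + (⇑Q)^[a] y ∈ iterD Q D (a + b) i j := by
  induction a generalizing i x with
  | zero =>
    by_cases h : i = l
    · subst h
      simp_all [iterD]
    · simp [iterD, h] at hx
  | succ a ih =>
    simp only [iterD, mem_iUnion, mem_add] at hx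
    obtain ⟨l₁, x₁, hx₁, _, ⟨x₂, hx₂, rfl⟩, rfl⟩ := hx
    rw [Nat.add_right_comm]
    simp only [iterD, mem_iUnion]
    have := add_mem_add hx₁ (mem_image_of_mem Q (ih hx₂))
    rw [map_add, ← Function.iterate_succ_apply' Q, ← add_assoc] at this
    exact ⟨l₁, this⟩

theorem exists_eq_iterate_add_of_mem {Λ : Fin m → Set E}
    (hΛ : ∀ i, Λ i = ⋃ j, ⇑Q '' Λ j + D i j) (n : ℕ) {i : Fin m} {u : E} (hu : u ∈ Λ i) :
    ∃ l, ∃ u' ∈ Λ l, ∃ δ ∈ iterD Q D n i l, u = (⇑Q)^[n] u' + δ := by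
  induction n generalizing i u with
  | zero => exact ⟨i, u, hu, 0, by simp [iterD], by simp⟩
  | succ n ih =>
    rw [hΛ i, mem_iUnion] at hu
    obtain ⟨j, _, ⟨w, hw, rfl⟩, δ₁, hδ₁, rfl⟩ := hu
    obtain ⟨l, u', hu', δ, hδ, rfl⟩ := ih hw
    refine ⟨l, u', hu', δ₁ + Q δ, mem_iUnion.2 ⟨j, add_mem_add hδ₁ (mem_image_of_mem Q hδ)⟩, ?_⟩
    dsimp only
    rw [map_add, Function.iterate_succ_apply']
    abel

theorem iterate_add_mem_vadd_iterD {n k : ℕ} {ξ y δ : E} {i l j : Fin m}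
    (hy : y ∈ (⇑Q)^[n] ξ +ᵥ iterD Q D n l j) (hδ : δ ∈ iterD Q D k i l) :
    (⇑Q)^[k] y + δ ∈ (⇑Q)^[n + k] ξ +ᵥ iterD Q D (n + k) i j := by
  obtain ⟨ε, hε, rfl⟩ := hy
  rw [Nat.add_comm n k]
  refine ⟨δ + (⇑Q)^[k] ε, add_iterate_mem_iterD Q D hδ hε, ?_⟩
  simp only [vadd_eq_add, iterate_map_add, Function.iterate_add_apply]
  abel

end AdditiveSubstitution

theorem norm_sub_le_sSup_of_finite {ι E : Type*} [Finite ι] [SeminormedAddCommGroup E]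
    {S : ι → ι → Set E} (hS : ∀ i j, (S i j).Finite) {i j i' j' : ι} {x y : E}
    (hx : x ∈ S i j) (hy : y ∈ S i' j') :
    ‖x - y‖ ≤ sSup {t : ℝ | ∃ i j i' j' : ι, ∃ x ∈ S i j, ∃ y ∈ S i' j', t = ‖x - y‖} := by
  have hT : (⋃ i, ⋃ j, S i j).Finite := finite_iUnion fun i => finite_iUnion (hS i)
  refine le_csSup (((hT.prod hT).image fun p : E × E => ‖p.1 - p.2‖).subset ?_).bddAbove
    ⟨i, j, i', j', x, hx, y, hy, rfl⟩
  rintro _ ⟨i, j, i', j', x, hx, y, hy, rfl⟩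
  exact ⟨(x, y), ⟨mem_iUnion₂.2 ⟨i, j, hx⟩, mem_iUnion₂.2 ⟨i', j', hy⟩⟩, rfl⟩

theorem ContinuousLinearEquiv.symm_pow_apply_iterate {R M : Type*} [Semiring R]
    [TopologicalSpace M] [AddCommMonoid M] [Module R M] (Q : M ≃L[R] M) (k : ℕ) (x : M) :
    ((Q.symm : M →L[R] M) ^ k) ((⇑Q)^[k] x) = x := by
  rw [FunLike.coe_pow_eq_iterate]
  exact (Function.LeftInverse.iterate Q.symm_apply_apply k) x

theorem norm_apply_sub_lt_of_norm_lt_one {E : Type*} [SeminormedAddCommGroup E]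
    [NormedSpace ℝ E] (P : E →L[ℝ] E) (hP : ‖P‖ < 1) {e R c : ℝ}
    (hR : R = e * ‖P‖ / (1 - ‖P‖)) {x α δ : E} (hx : ‖x - α‖ < R) (hα : ‖α‖ ≤ c)
    (hδ : ‖δ‖ ≤ e) : ‖P (x - δ)‖ < R + ‖P‖ * c := by
  have hR' : R * (1 - ‖P‖) = e * ‖P‖ := by
    rw [hR]
    field_simp [(sub_pos.2 hP).ne']
  have hP₀ : 0 < ‖P‖ := by
    refine (norm_nonneg P).lt_of_ne fun h => ?_
    rw [← h] at hR'
    linarith [norm_nonneg (x - α)]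
  have hxδ : ‖x - δ‖ ≤ ‖x - α‖ + ‖α‖ + ‖δ‖ := by
    calc ‖x - δ‖ = ‖(x - α) + α - δ‖ := by rw [sub_add_cancel]
      _ ≤ ‖x - α‖ + ‖α‖ + ‖δ‖ := (norm_sub_le _ _).trans (by gcongr; exact norm_add_le _ _)
  calc ‖P (x - δ)‖ ≤ ‖P‖ * ‖x - δ‖ := P.le_opNorm _
    _ < ‖P‖ * (R + c + e) := by gcongr; linarith
    _ = R + ‖P‖ * c := by linear_combination -hR'

theorem stmt_9_general (d m : ℕ)
    (Q : EuclideanSpace ℝ (Fin d) ≃L[ℝ] EuclideanSpace ℝ (Fin d))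
    (D : Fin m → Fin m → Set (EuclideanSpace ℝ (Fin d)))
    (hDfin : ∀ i j, (D i j).Finite)
    (k : ℕ)
    (hQk : ‖(Q.symm : EuclideanSpace ℝ (Fin d) →L[ℝ] EuclideanSpace ℝ (Fin d)) ^ k‖ < 1)
    (e : ℝ)
    (he : e = sSup {t : ℝ | ∃ i j i' j' : Fin m,
      ∃ x ∈ iterD (⇑Q) D k i j, ∃ y ∈ iterD (⇑Q) D k i' j', t = ‖x - y‖})
    (R : ℝ)
    (hR : R = e * ‖(Q.symm : EuclideanSpace ℝ (Fin d) →L[ℝ] EuclideanSpace ℝ (Fin d)) ^ k‖ /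
      (1 - ‖(Q.symm : EuclideanSpace ℝ (Fin d) →L[ℝ] EuclideanSpace ℝ (Fin d)) ^ k‖))
    (Λ : Fin m → Set (EuclideanSpace ℝ (Fin d)))
    (hsub : ∀ i, Λ i = ⋃ j, ⇑Q '' Λ j + D i j)
    (j₀ : Fin m) (ξ : EuclideanSpace ℝ (Fin d))
    (Phi : ℕ → Fin m → Set (EuclideanSpace ℝ (Fin d)))
    (hPhi : ∀ n i, Phi n i = (⇑Q)^[n] ξ +ᵥ iterD (⇑Q) D n i j₀)
    (αmax : ℝ)
    (J : (Fin m → Set (EuclideanSpace ℝ (Fin d))) →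
      Set (Fin m × EuclideanSpace ℝ (Fin d) × Fin m))
    (hJ : ∀ G, J G = { t | ∃ i j, ∃ y ∈ G i, ∃ z ∈ G j,
      t = (i, y - z, j) ∧ ‖y - z‖ <
        R + ‖(Q.symm : EuclideanSpace ℝ (Fin d) →L[ℝ] EuclideanSpace ℝ (Fin d)) ^ k‖ * αmax })
    (N : ℕ)
    (hJeq : J (Phi N) = J Λ) :
    ∀ α : EuclideanSpace ℝ (Fin d), ‖α‖ ≤ αmax →
      ∀ (i j : Fin m), ∀ u ∈ Λ i, ∀ v ∈ Λ j, ‖u - α - v‖ < R →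
        ∃ y ∈ Phi (N + k) i, ∃ z ∈ Phi (N + k) j, y - z = u - v := by
  intro α hα i j u hu v hv huv
  obtain ⟨i', u', hu', δu, hδu, rfl⟩ := exists_eq_iterate_add_of_mem Q D hsub k hu
  obtain ⟨j', v', hv', δv, hδv, rfl⟩ := exists_eq_iterate_add_of_mem Q D hsub k hv
  have hδ : ‖δu - δv‖ ≤ e := he ▸ norm_sub_le_sSup_of_finite (iterD_finite Q hDfin k) hδu hδv
  have hclose : ‖u' - v'‖ <
      R + ‖(Q.symm : EuclideanSpace ℝ (Fin d) →L[ℝ] EuclideanSpace ℝ (Fin d)) ^ k‖ * αmax := by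
    have hw : (⇑Q)^[k] u' + δu - ((⇑Q)^[k] v' + δv) - (δu - δv) = (⇑Q)^[k] (u' - v') := by
      rw [iterate_map_sub]
      abel
    have := norm_apply_sub_lt_of_norm_lt_one _ hQk hR (by rwa [sub_right_comm]) hα hδ
    rwa [hw, Q.symm_pow_apply_iterate] at this
  have hmem : (i', u' - v', j') ∈ J (Phi N) := by
    rw [hJeq, hJ]
    exact ⟨i', j', u', hu', v', hv', rfl, hclose⟩
  rw [hJ] at hmem
  obtain ⟨_, _, y', hy', z', hz', heq, -⟩ := hmem
  simp only [Prod.mk.injEq] at heq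
  obtain ⟨rfl, hyz, rfl⟩ := heq
  rw [hPhi] at hy' hz'
  refine ⟨(⇑Q)^[k] y' + δu, hPhi .. ▸ iterate_add_mem_vadd_iterD Q D hy' hδu,
    (⇑Q)^[k] z' + δv, hPhi .. ▸ iterate_add_mem_vadd_iterD Q D hz' hδv, ?_⟩
  rw [add_sub_add_comm, ← iterate_map_sub, ← hyz, iterate_map_sub, add_sub_add_comm]

/-- all potential-overlap classes for a translation `α` with `|α| ≤ α_max`
appear already among differences of points of `Φ^{N+k}(ξ)`, provided `𝒥(Φ^N(ξ)) = 𝒥(Λ)`. -/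
theorem stmt_9 (d m : ℕ) (hd : 1 ≤ d) (hm : 1 ≤ m)
    (Q : EuclideanSpace ℝ (Fin d) ≃L[ℝ] EuclideanSpace ℝ (Fin d))
    (D : Fin m → Fin m → Set (EuclideanSpace ℝ (Fin d)))
    (hDfin : ∀ i j, (D i j).Finite)
    (k : ℕ) (hk : 1 ≤ k)
    (hQk : ‖(Q.symm : EuclideanSpace ℝ (Fin d) →L[ℝ] EuclideanSpace ℝ (Fin d)) ^ k‖ < 1)
    (e : ℝ)
    (he : e = sSup {t : ℝ | ∃ i j i' j' : Fin m,
      ∃ x ∈ iterD (⇑Q) D k i j, ∃ y ∈ iterD (⇑Q) D k i' j', t = ‖x - y‖})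
    (R : ℝ)
    (hR : R = e * ‖(Q.symm : EuclideanSpace ℝ (Fin d) →L[ℝ] EuclideanSpace ℝ (Fin d)) ^ k‖ /
      (1 - ‖(Q.symm : EuclideanSpace ℝ (Fin d) →L[ℝ] EuclideanSpace ℝ (Fin d)) ^ k‖))
    (Λ : Fin m → Set (EuclideanSpace ℝ (Fin d)))
    (hDel : ∀ i, IsDelone (Λ i)) (hDelU : IsDelone (⋃ i, Λ i))
    (hsub : ∀ i, Λ i = ⋃ j, ⇑Q '' Λ j + D i j)
    (hdisj : ∀ i : Fin m, ∀ j j' : Fin m, ∀ x ∈ D i j, ∀ x' ∈ D i j',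
      (j, x) ≠ (j', x') → Disjoint (x +ᵥ ⇑Q '' Λ j) (x' +ᵥ ⇑Q '' Λ j'))
    (j₀ : Fin m) (ξ : EuclideanSpace ℝ (Fin d)) (hξ : ξ ∈ Λ j₀)
    (d₀ : EuclideanSpace ℝ (Fin d)) (hd₀ : d₀ ∈ D j₀ j₀) (hfix : ξ = Q ξ + d₀)
    (Phi : ℕ → Fin m → Set (EuclideanSpace ℝ (Fin d)))
    (hPhi : ∀ n i, Phi n i = (⇑Q)^[n] ξ +ᵥ iterD (⇑Q) D n i j₀)
    (hgen : ∀ i, Λ i = ⋃ n : ℕ, Phi n i)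
    (αmax : ℝ) (hα : 0 < αmax)
    (J : (Fin m → Set (EuclideanSpace ℝ (Fin d))) →
      Set (Fin m × EuclideanSpace ℝ (Fin d) × Fin m))
    (hJ : ∀ G, J G = { t | ∃ i j, ∃ y ∈ G i, ∃ z ∈ G j,
      t = (i, y - z, j) ∧ ‖y - z‖ <
        R + ‖(Q.symm : EuclideanSpace ℝ (Fin d) →L[ℝ] EuclideanSpace ℝ (Fin d)) ^ k‖ * αmax })
    (N : ℕ) (hN : 1 ≤ N)
    (hJeq : J (Phi N) = J Λ) :
    ∀ α : EuclideanSpace ℝ (Fin d), ‖α‖ ≤ αmax →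
      ∀ (i j : Fin m), ∀ u ∈ Λ i, ∀ v ∈ Λ j, ‖u - α - v‖ < R →
        ∃ y ∈ Phi (N + k) i, ∃ z ∈ Phi (N + k) j, y - z = u - v :=
  stmt_9_general d m Q D hDfin k hQk e he R hR Λ hsub j₀ ξ Phi hPhi αmax J hJ N hJeq
end
end

section
/- Null attractors of a graph-directed self-similar iterated function system with uniformly separated translation parts force a small graph: let Γ_{kℓ} (1 ≤ k, ℓ ≤ M) be finite edge sets, each edge e carrying a vector d_e ∈ ℝ^d, let λ > 1, O a linear isometry of ℝ^d, Q = λO, and f_e(x) = Q^{−1}(x + d_e). Let E₁,…,E_M be nonempty compact subsets of ℝ^d with E_k = ⋃_{ℓ ≤ M} ⋃_{e ∈ Γ_{kℓ}} f_e(E_ℓ) for all k. For a path I = e₁⋯e_n from k to ℓ put d_I = Σ_{i=1}^n Q^{n−i} d_{e_i}, and assume there is r > 0 such that for all n ≥ 1 and all k, ℓ, the points d_I over paths I of length n from k to ℓ are pairwise distinct with mutual distance at least r. If every E_k has d-dimensional Lebesgue measure zero, then the spectral radius of the nonnegative M×M matrix (#Γ_{kℓ})_{k,ℓ} is strictly less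 than λ^d. -/
/-!
If `ν` is an eigenvalue of the edge-count matrix `A` with `‖ν‖ ≥ λ^d`, then `‖ν‖^n ≤ ‖A^n‖_∞`, so
for every `n` some entry `(A^n)_{kl}` is at least `λ^{dn}/M`. By separation, distinct paths have
distinct translation parts, so `(A^n)_{kl}` counts the points `d_I`; for `y ∈ E_l` the points
`Q^{-n}(y + d_I)` lie in `E_k` and are `rλ^{-n}`-separated. The disjoint balls of radius
`rλ^{-n}/2` around them give the `rλ^{-n}/2`-neighbourhood of `⋃ E_k` measure at least a
constant times `(r/2)^d/M`, independently of `n`, whereas these neighbourhoods shrink to the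
null compact set `⋃ E_k`.
-/

open Set Filter Topology Metric MeasureTheory

open scoped Matrix.Norms.Operator in
theorem Matrix.exists_norm_pow_le_sum_norm_pow_apply {ι : Type*} [Fintype ι] [DecidableEq ι]
    [Nonempty ι] {A : Matrix ι ι ℂ} {ν : ℂ} (hν : ν ∈ spectrum ℂ A) (n : ℕ) :
    ∃ k, ‖ν‖ ^ n ≤ ∑ l, ‖(A ^ n) k l‖ := by
  have hle := spectrum.norm_le_norm_of_mem (spectrum.pow_mem_pow A n hν)
  obtain ⟨k, -, hk⟩ := Finset.exists_mem_eq_sup Finset.univ Finset.univ_nonempty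
    fun i => ∑ j, ‖(A ^ n) i j‖₊
  refine ⟨k, ?_⟩
  rw [norm_pow, Matrix.linfty_opNorm_def, hk] at hle
  simpa using hle

theorem sum_measure_ball_le_measure_thickening {α X : Type*} [PseudoMetricSpace X]
    [MeasurableSpace X] [OpensMeasurableSpace X] (μ : Measure X) {S : Finset α} {p : α → X}
    {s : Set X} {δ : ℝ} (hps : ∀ a ∈ S, p a ∈ s)
    (hp : (S : Set α).Pairwise fun a b => 2 * δ ≤ dist (p a) (p b)) :
    ∑ a ∈ S, μ (ball (p a) δ) ≤ μ (thickening δ s) := by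
  rw [← measure_biUnion_finset (fun a ha b hb hab => ball_disjoint_ball
    (by linarith [hp ha hb hab])) fun _ _ => measurableSet_ball]
  exact measure_mono (iUnion₂_subset fun a ha => ball_subset_thickening (hps a ha) δ)

namespace GraphDirectedIFS

variable {ι E : Type*} {Γ : ι → ι → Finset E}

/-- Edges are identified with their translation vectors: `c i` is the `i`-th edge of the path,
from `v i` to `v (i + 1)`. -/
def IsPath (Γ : ι → ι → Finset E) {n : ℕ} (v : Fin (n + 1) → ι) (c : Fin n → E) : Prop :=
  ∀ i : Fin n, c i ∈ Γ (v i.castSucc) (v i.succ)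

theorem IsPath.cons {n : ℕ} {k : ι} {v : Fin (n + 1) → ι} {c : Fin n → E} {e : E}
    (hc : IsPath Γ v c) (he : e ∈ Γ k (v 0)) :
    IsPath Γ (Fin.cons k v : Fin (n + 2) → ι) (Fin.cons e c : Fin (n + 1) → E) := by
  intro i
  induction i using Fin.cases with
  | zero => simpa using he
  | succ j => simpa [← Fin.succ_castSucc] using hc j

variable [Fintype ι] [DecidableEq ι] [NormedAddCommGroup E] [NormedSpace ℝ E]
  {L : E →L[ℝ] E} {r : ℝ}

theorem norm_pow_apply_of_forall_norm_apply {lam : ℝ} (hL : ∀ x, ‖L x‖ = lam * ‖x‖) (n : ℕ)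
    (x : E) : ‖(L ^ n) x‖ = lam ^ n * ‖x‖ := by
  induction n with
  | zero => simp
  | succ n ih =>
    rw [pow_succ', mul_apply_eq_comp, hL, ih, pow_succ]
    ring

def pathSum (L : E →L[ℝ] E) {n : ℕ} (c : Fin n → E) : E :=
  ∑ i : Fin n, (L ^ (n - 1 - (i : ℕ))) (c i)

theorem pathSum_cons {n : ℕ} (e : E) (c : Fin n → E) :
    pathSum L (Fin.cons e c : Fin (n + 1) → E) = (L ^ n) e + pathSum L c := by
  simp only [pathSum, Fin.sum_univ_succ, Fin.cons_zero, Fin.cons_succ, Fin.val_zero,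
    Fin.val_succ]
  congr 2 with i
  congr 2
  omega

def PathSumsSeparated (Γ : ι → ι → Finset E) (L : E →L[ℝ] E) (r : ℝ) : Prop :=
  ∀ n : ℕ, 1 ≤ n → ∀ k l : ι, ∀ v w : Fin (n + 1) → ι, ∀ c c' : Fin n → E,
    v 0 = k → v (Fin.last n) = l → w 0 = k → w (Fin.last n) = l →
    IsPath Γ v c → IsPath Γ w c' → (v, c) ≠ (w, c') → r ≤ ‖pathSum L c - pathSum L c'‖

variable [DecidableEq E]

/-- The translation parts `d_I` of the paths `I` of length `n` from `k` to `l`. -/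
def pathSums (Γ : ι → ι → Finset E) (L : E →L[ℝ] E) : ℕ → ι → ι → Finset E
  | 0, k, l => if k = l then {0} else ∅
  | n + 1, k, l => Finset.univ.biUnion fun m => (Γ k m).biUnion fun e =>
      (pathSums Γ L n m l).image ((L ^ n) e + ·)

theorem exists_path_of_mem_pathSums {n : ℕ} {k l : ι} {x : E} (hx : x ∈ pathSums Γ L n k l) :
    ∃ v : Fin (n + 1) → ι, ∃ c : Fin n → E,
      v 0 = k ∧ v (Fin.last n) = l ∧ IsPath Γ v c ∧ x = pathSum L c := by
  induction n generalizing k x with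
  | zero =>
    by_cases hkl : k = l
    · subst hkl
      simp only [pathSums, if_true, Finset.mem_singleton] at hx
      exact ⟨fun _ => k, Fin.elim0, rfl, rfl, fun i => i.elim0, by simp [pathSum, hx]⟩
    · simp [pathSums, hkl] at hx
  | succ n ih =>
    simp only [pathSums, Finset.mem_biUnion, Finset.mem_univ, Finset.mem_image, true_and] at hx
    obtain ⟨m, e, he, x', hx', rfl⟩ := hx
    obtain ⟨v, c, rfl, hvl, hc, rfl⟩ := ih hx'
    exact ⟨Fin.cons k v, Fin.cons e c, Fin.cons_zero _ _,
      by rw [← Fin.succ_last, Fin.cons_succ, hvl], hc.cons he, (pathSum_cons e c).symm⟩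

namespace PathSumsSeparated

variable (hsep : PathSumsSeparated Γ L r) (hr : 0 < r)
include hsep

theorem le_norm_sub {n : ℕ} (hn : 1 ≤ n) {k l : ι} {x x' : E} (hx : x ∈ pathSums Γ L n k l)
    (hx' : x' ∈ pathSums Γ L n k l) (hxx' : x ≠ x') : r ≤ ‖x - x'‖ := by
  obtain ⟨v, c, hv0, hvl, hc, rfl⟩ := exists_path_of_mem_pathSums hx
  obtain ⟨w, c', hw0, hwl, hc', rfl⟩ := exists_path_of_mem_pathSums hx'
  exact hsep n hn k l v w c c' hv0 hvl hw0 hwl hc hc' fun h => hxx' (by cases h; rfl)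

include hr

theorem eq_of_add_eq {n : ℕ} {k l m m' : ι} {e e' x x' : E} (he : e ∈ Γ k m)
    (he' : e' ∈ Γ k m') (hx : x ∈ pathSums Γ L n m l) (hx' : x' ∈ pathSums Γ L n m' l)
    (h : (L ^ n) e + x = (L ^ n) e' + x') : m = m' ∧ e = e' ∧ x = x' := by
  obtain ⟨v, c, rfl, hvl, hc, rfl⟩ := exists_path_of_mem_pathSums hx
  obtain ⟨w, c', rfl, hwl, hc', rfl⟩ := exists_path_of_mem_pathSums hx'
  have hpath : ((Fin.cons k v : Fin (n + 2) → ι), (Fin.cons e c : Fin (n + 1) → E)) =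
      (Fin.cons k w, Fin.cons e' c') := by
    by_contra hne
    have hle := hsep (n + 1) (by omega) k l _ _ _ _ (Fin.cons_zero _ _)
      (by rw [← Fin.succ_last, Fin.cons_succ, hvl]) (Fin.cons_zero _ _)
      (by rw [← Fin.succ_last, Fin.cons_succ, hwl]) (hc.cons he) (hc'.cons he') hne
    rw [pathSum_cons, pathSum_cons, h, sub_self, norm_zero] at hle
    exact hle.not_gt hr
  simp only [Prod.mk.injEq, Fin.cons_inj] at hpath
  obtain ⟨⟨-, rfl⟩, rfl, rfl⟩ := hpath
  exact ⟨rfl, rfl, rfl⟩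

theorem card_pathSums_succ (n : ℕ) (k l : ι) :
    (pathSums Γ L (n + 1) k l).card = ∑ m, (Γ k m).card * (pathSums Γ L n m l).card := by
  rw [pathSums, Finset.card_biUnion]
  · refine Finset.sum_congr rfl fun m _ => ?_
    rw [Finset.card_biUnion, Finset.sum_congr rfl fun e _ =>
      Finset.card_image_of_injective _ (add_right_injective _), Finset.sum_const, smul_eq_mul]
    intro e he e' he' hee'
    refine Finset.disjoint_left.2 fun z hz hz' => ?_
    obtain ⟨x, hx, rfl⟩ := Finset.mem_image.1 hz
    obtain ⟨x', hx', hxx'⟩ := Finset.mem_image.1 hz'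
    exact hee' (hsep.eq_of_add_eq hr he he' hx hx' hxx'.symm).2.1
  · intro m _ m' _ hmm'
    refine Finset.disjoint_left.2 fun z hz hz' => ?_
    simp only [Finset.mem_biUnion, Finset.mem_image] at hz hz'
    obtain ⟨e, he, x, hx, rfl⟩ := hz
    obtain ⟨e', he', x', hx', hxx'⟩ := hz'
    exact hmm' (hsep.eq_of_add_eq hr he he' hx hx' hxx'.symm).1

/-- Distinct paths have distinct translation parts, so `pathSums` counts paths. -/
theorem cast_card_pathSums {R : Type*} [Semiring R] (n : ℕ) (k l : ι) :
    ((pathSums Γ L n k l).card : R) = ((Matrix.of fun k l => ((Γ k l).card : R)) ^ n) k l := by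
  induction n generalizing k with
  | zero => by_cases hkl : k = l <;> simp [pathSums, hkl]
  | succ n ih =>
    simp [pow_succ', Matrix.mul_apply, ← ih, hsep.card_pathSums_succ hr]

end PathSumsSeparated

theorem exists_mem_pow_apply_eq_add {Q : E ≃L[ℝ] E} {Ek : ι → Set E}
    (hattr : ∀ k, Ek k = ⋃ l, ⋃ e ∈ Γ k l, (fun x => Q.symm (x + e)) '' Ek l)
    {n : ℕ} {k l : ι} {x y : E} (hx : x ∈ pathSums Γ (Q : E →L[ℝ] E) n k l) (hy : y ∈ Ek l) :
    ∃ p ∈ Ek k, ((Q : E →L[ℝ] E) ^ n) p = y + x := by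
  induction n generalizing k x with
  | zero =>
    by_cases hkl : k = l
    · subst hkl
      simp only [pathSums, if_true, Finset.mem_singleton] at hx
      exact ⟨y, hy, by simp [hx]⟩
    · simp [pathSums, hkl] at hx
  | succ n ih =>
    simp only [pathSums, Finset.mem_biUnion, Finset.mem_univ, Finset.mem_image, true_and] at hx
    obtain ⟨m, e, he, x', hx', rfl⟩ := hx
    obtain ⟨p, hp, hpx⟩ := ih hx'
    refine ⟨Q.symm (p + e), ?_, ?_⟩
    · rw [hattr k]
      exact mem_iUnion.2 ⟨m, mem_iUnion₂.2 ⟨e, he, p, hp, rfl⟩⟩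
    · rw [pow_succ, mul_apply_eq_comp, ContinuousLinearEquiv.coe_coe, Q.apply_symm_apply, map_add,
        hpx]
      abel

theorem card_pathSums_mul_le_measure_thickening [MeasurableSpace E] [BorelSpace E]
    [FiniteDimensional ℝ E] (μ : Measure E) [μ.IsAddHaarMeasure] {Q : E ≃L[ℝ] E} {lam : ℝ}
    (hlam : 0 < lam) (hQ : ∀ x, ‖Q x‖ = lam * ‖x‖) {Ek : ι → Set E}
    (hattr : ∀ k, Ek k = ⋃ l, ⋃ e ∈ Γ k l, (fun x => Q.symm (x + e)) '' Ek l)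
    (hsep : PathSumsSeparated Γ (Q : E →L[ℝ] E) r) {n : ℕ} (hn : 1 ≤ n) {k l : ι}
    (hl : (Ek l).Nonempty) {δ : ℝ} (hδ : 0 < δ) (hδr : 2 * δ * lam ^ n ≤ r) :
    (pathSums Γ (Q : E →L[ℝ] E) n k l).card * ENNReal.ofReal (δ ^ Module.finrank ℝ E) *
      μ (ball 0 1) ≤ μ (thickening δ (Ek k)) := by
  obtain ⟨y, hy⟩ := hl
  choose! p hpE hp using fun x (hx : x ∈ pathSums Γ (Q : E →L[ℝ] E) n k l) =>
    exists_mem_pow_apply_eq_add hattr hx hy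
  calc _ = ∑ x ∈ pathSums Γ (Q : E →L[ℝ] E) n k l, μ (ball (p x) δ) := by
        simp [Measure.addHaar_ball_of_pos μ _ hδ, mul_assoc]
    _ ≤ _ := by
      refine sum_measure_ball_le_measure_thickening μ hpE fun x hx x' hx' hxx' => ?_
      have hscale : lam ^ n * dist (p x) (p x') = ‖x - x'‖ := by
        rw [dist_eq_norm, ← norm_pow_apply_of_forall_norm_apply (L := (Q : E →L[ℝ] E)) hQ,
          map_sub, hp x hx, hp x' hx', add_sub_add_left_eq_sub]
      have hsep_n := hsep.le_norm_sub hn hx hx' hxx'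
      exact le_of_mul_le_mul_left (by linarith) (pow_pos hlam n)

theorem PathSumsSeparated.exists_norm_pow_div_le_card [Nonempty ι]
    (hsep : PathSumsSeparated Γ L r) (hr : 0 < r) {ν : ℂ}
    (hν : ν ∈ spectrum ℂ (Matrix.of fun k l => ((Γ k l).card : ℂ))) (n : ℕ) :
    ∃ k l, ‖ν‖ ^ n / Fintype.card ι ≤ (pathSums Γ L n k l).card := by
  obtain ⟨k, hk⟩ := Matrix.exists_norm_pow_le_sum_norm_pow_apply hν n
  simp_rw [← hsep.cast_card_pathSums hr, Complex.norm_natCast] at hk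
  have hsum : ∑ _l : ι, ‖ν‖ ^ n / Fintype.card ι ≤ ∑ l, ((pathSums Γ L n k l).card : ℝ) := by
    rwa [Finset.sum_const, Finset.card_univ, nsmul_eq_mul, mul_div_cancel₀ _ (by positivity)]
  obtain ⟨l, -, hl⟩ := Finset.exists_le_of_sum_le Finset.univ_nonempty hsum
  exact ⟨k, l, hl⟩

theorem PathSumsSeparated.le_measure_cthickening_iUnion [Nonempty ι] [MeasurableSpace E]
    [BorelSpace E] [FiniteDimensional ℝ E] (μ : Measure E) [μ.IsAddHaarMeasure]
    {Q : E ≃L[ℝ] E} {lam : ℝ} (hlam : 0 < lam) (hQ : ∀ x, ‖Q x‖ = lam * ‖x‖) {Ek : ι → Set E}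
    (hattr : ∀ k, Ek k = ⋃ l, ⋃ e ∈ Γ k l, (fun x => Q.symm (x + e)) '' Ek l)
    (hne : ∀ k, (Ek k).Nonempty) (hsep : PathSumsSeparated Γ (Q : E →L[ℝ] E) r) (hr : 0 < r)
    {ν : ℂ} (hν : ν ∈ spectrum ℂ (Matrix.of fun k l => ((Γ k l).card : ℂ)))
    (hν_ge : lam ^ Module.finrank ℝ E ≤ ‖ν‖) {n : ℕ} (hn : 1 ≤ n) :
    ENNReal.ofReal ((r / 2) ^ Module.finrank ℝ E / Fintype.card ι) * μ (ball 0 1) ≤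
      μ (cthickening (r / 2 / lam ^ n) (⋃ k, Ek k)) := by
  set D := Module.finrank ℝ E
  obtain ⟨k, l, hkl⟩ := hsep.exists_norm_pow_div_le_card hr hν n
  set N := (pathSums Γ (Q : E →L[ℝ] E) n k l).card
  have hN : (r / 2) ^ D / Fintype.card ι ≤ N * (r / 2 / lam ^ n) ^ D :=
    calc (r / 2) ^ D / Fintype.card ι
        = (lam ^ D) ^ n * (r / 2 / lam ^ n) ^ D / Fintype.card ι := by
          rw [div_pow (r / 2), ← pow_mul, ← pow_mul, mul_comm n D,
            mul_div_cancel₀ _ (by positivity)]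
      _ ≤ _ := by
        rw [mul_div_right_comm]
        gcongr
        exact le_trans (by gcongr) hkl
  calc _ ≤ ENNReal.ofReal (N * (r / 2 / lam ^ n) ^ D) * μ (ball 0 1) := by gcongr
    _ = N * ENNReal.ofReal ((r / 2 / lam ^ n) ^ D) * μ (ball 0 1) := by
        rw [ENNReal.ofReal_mul (Nat.cast_nonneg _), ENNReal.ofReal_natCast]
    _ ≤ μ (thickening (r / 2 / lam ^ n) (Ek k)) :=
        card_pathSums_mul_le_measure_thickening μ hlam hQ hattr hsep hn (hne l) (by positivity)
          (by field_simp; rfl)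
    _ ≤ μ (cthickening (r / 2 / lam ^ n) (⋃ k, Ek k)) := measure_mono <|
        (thickening_subset_cthickening _ _).trans
          (cthickening_subset_of_subset _ (subset_iUnion _ k))

end GraphDirectedIFS

theorem stmt_14_general (d M : ℕ) (hM : 1 ≤ M)
    (lam : ℝ) (hlam : 1 < lam)
    (Q : EuclideanSpace ℝ (Fin d) ≃L[ℝ] EuclideanSpace ℝ (Fin d))
    (hQ : ∀ x, ‖Q x‖ = lam * ‖x‖)
    (Γ : Fin M → Fin M → Finset (EuclideanSpace ℝ (Fin d)))
    (Ek : Fin M → Set (EuclideanSpace ℝ (Fin d)))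
    (hne : ∀ k, (Ek k).Nonempty) (hcp : ∀ k, IsCompact (Ek k))
    (hattr : ∀ k, Ek k = ⋃ l, ⋃ e ∈ Γ k l, (fun x => Q.symm (x + e)) '' Ek l)
    (r : ℝ) (hr : 0 < r)
    (hsep : ∀ n : ℕ, 1 ≤ n → ∀ k l : Fin M,
      ∀ v w : Fin (n + 1) → Fin M, ∀ c c' : Fin n → EuclideanSpace ℝ (Fin d),
        v 0 = k → v (Fin.last n) = l → w 0 = k → w (Fin.last n) = l →
        (∀ i : Fin n, c i ∈ Γ (v i.castSucc) (v i.succ)) →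
        (∀ i : Fin n, c' i ∈ Γ (w i.castSucc) (w i.succ)) →
        (v, c) ≠ (w, c') →
        r ≤ ‖(∑ i : Fin n,
              ((Q : EuclideanSpace ℝ (Fin d) →L[ℝ] EuclideanSpace ℝ (Fin d)) ^ (n - 1 - (i : ℕ)))
                (c i)) -
            ∑ i : Fin n,
              ((Q : EuclideanSpace ℝ (Fin d) →L[ℝ] EuclideanSpace ℝ (Fin d)) ^ (n - 1 - (i : ℕ)))
                (c' i)‖)
    (hnull : ∀ k, volume (Ek k) = 0) :
    ∀ μ ∈ spectrum ℂ (Matrix.of fun k l : Fin M => ((Γ k l).card : ℂ)),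
      ‖μ‖ < lam ^ d := by
  classical
  intro μ hμ
  by_contra! hμ_ge
  have : Nonempty (Fin M) := ⟨⟨0, hM⟩⟩
  have hlower (n : ℕ) (hn : 1 ≤ n) :=
    GraphDirectedIFS.PathSumsSeparated.le_measure_cthickening_iUnion volume
      (zero_lt_one.trans hlam) hQ hattr hne hsep hr hμ (by rwa [finrank_euclideanSpace_fin]) hn
  simp only [finrank_euclideanSpace_fin, Fintype.card_fin] at hlower
  have hpos :
      0 < ENNReal.ofReal ((r / 2) ^ d / M) * volume (ball (0 : EuclideanSpace ℝ (Fin d)) 1) :=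
    ENNReal.mul_pos (by simp; positivity) (measure_ball_pos _ _ one_pos).ne'
  have hδ : Tendsto (fun n => r / 2 / lam ^ n) atTop (𝓝 0) :=
    tendsto_const_nhds.div_atTop (tendsto_pow_atTop_atTop_of_one_lt hlam)
  have htend :=
    (tendsto_measure_cthickening_of_isCompact (μ := volume) (isCompact_iUnion hcp)).comp hδ
  rw [measure_iUnion_null hnull] at htend
  exact hpos.not_ge (ge_of_tendsto htend (eventually_atTop.2 ⟨1, hlower⟩))

/-- for a graph-directed self-similar IFS `f_e(x) = Q⁻¹(x + d_e)`,
`Q = λ·O` with `O` a linear isometry (equivalently `‖Qx‖ = λ‖x‖`), whose path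
translation parts `d_I` are uniformly separated, if all attractor pieces `E_k` are
Lebesgue-null then the spectral radius of the edge-count matrix `(#Γ_{kℓ})` is `< λ^d`. -/
theorem stmt_14 (d M : ℕ) (hd : 1 ≤ d) (hM : 1 ≤ M)
    (lam : ℝ) (hlam : 1 < lam)
    (Q : EuclideanSpace ℝ (Fin d) ≃L[ℝ] EuclideanSpace ℝ (Fin d))
    (hQ : ∀ x, ‖Q x‖ = lam * ‖x‖)
    (Γ : Fin M → Fin M → Finset (EuclideanSpace ℝ (Fin d)))
    (Ek : Fin M → Set (EuclideanSpace ℝ (Fin d)))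
    (hne : ∀ k, (Ek k).Nonempty) (hcp : ∀ k, IsCompact (Ek k))
    (hattr : ∀ k, Ek k = ⋃ l, ⋃ e ∈ Γ k l, (fun x => Q.symm (x + e)) '' Ek l)
    (r : ℝ) (hr : 0 < r)
    (hsep : ∀ n : ℕ, 1 ≤ n → ∀ k l : Fin M,
      ∀ v w : Fin (n + 1) → Fin M, ∀ c c' : Fin n → EuclideanSpace ℝ (Fin d),
        v 0 = k → v (Fin.last n) = l → w 0 = k → w (Fin.last n) = l →
        (∀ i : Fin n, c i ∈ Γ (v i.castSucc) (v i.succ)) →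
        (∀ i : Fin n, c' i ∈ Γ (w i.castSucc) (w i.succ)) →
        (v, c) ≠ (w, c') →
        r ≤ ‖(∑ i : Fin n,
              ((Q : EuclideanSpace ℝ (Fin d) →L[ℝ] EuclideanSpace ℝ (Fin d)) ^ (n - 1 - (i : ℕ)))
                (c i)) -
            ∑ i : Fin n,
              ((Q : EuclideanSpace ℝ (Fin d) →L[ℝ] EuclideanSpace ℝ (Fin d)) ^ (n - 1 - (i : ℕ)))
                (c' i)‖)
    (hnull : ∀ k, volume (Ek k) = 0) :
    ∀ μ ∈ spectrum ℂ (Matrix.of fun k l : Fin M => ((Γ k l).card : ℂ)),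
      ‖μ‖ < lam ^ d :=
  stmt_14_general d M hM lam hlam Q hQ Γ Ek hne hcp hattr r hr hsep hnull
end

section
/- Real overlaps generate exponentially many overlapping pairs under inflation: assume each A_i is the closure of its interior and the pieces d + A_i (over i ≤ m, d ∈ D_ij) in the tile equation have pairwise disjoint interiors. Let z ∈ ℝ^d and i, j ≤ m be such that the interiors of z + A_i and A_j intersect. Then there exist constants c₁, c₂ > 0 such that for all n ≥ 1, c₁·|det Q|ⁿ ≤ #{ (p, q, d, d′) : p, q ≤ m, d ∈ (Dⁿ)_{pi}, d′ ∈ (Dⁿ)_{qj}, the interiors of Qⁿz + d + A_p and d′ + A_q intersect } ≤ c₂·|det Q|ⁿ. -/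
open Pointwise Set MeasureTheory
open scoped ENNReal

noncomputable section

section AuxST16

variable {E : Type*} [NormedAddCommGroup E] [NormedSpace ℝ E] {m : ℕ}
variable (Q : E ≃L[ℝ] E) (D : Fin m → Fin m → Set E) (A : Fin m → Set E)

lemma iterD_finite_st16 (hDfin : ∀ i j, (D i j).Finite) :
    ∀ n i j, (iterD (⇑Q) D n i j).Finite := by
  intro n
  induction n with
  | zero =>
    intro i j
    simp only [iterD]
    split <;> simp
  | succ n ih =>
    intro i j
    simp only [iterD]
    exact Set.finite_iUnion fun l => (hDfin i l).add ((ih l j).image _)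

lemma iter_add_st16 (n : ℕ) (x y : E) :
    (⇑Q)^[n] (x + y) = (⇑Q)^[n] x + (⇑Q)^[n] y := by
  induction n with
  | zero => simp
  | succ n ih => simp [Function.iterate_succ_apply', ih]

lemma iter_image_vadd_st16 (n : ℕ) (x : E) (s : Set E) :
    (⇑Q)^[n] '' (x +ᵥ s) = (⇑Q)^[n] x +ᵥ (⇑Q)^[n] '' s := by
  ext w
  constructor
  · rintro ⟨u, ⟨a, ha, rfl⟩, rfl⟩
    exact ⟨(⇑Q)^[n] a, ⟨a, ha, rfl⟩, ((iter_add_st16 Q n x a).symm : _)⟩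
  · rintro ⟨u, ⟨a, ha, rfl⟩, rfl⟩
    exact ⟨x + a, ⟨a, ha, rfl⟩, iter_add_st16 Q n x a⟩

lemma qimage_vadd_st16 (x : E) (s : Set E) : ⇑Q '' (x +ᵥ s) = Q x +ᵥ ⇑Q '' s := by
  simpa using iter_image_vadd_st16 Q 1 x s

lemma piece_subset_st16 (htile : ∀ j, ⇑Q '' A j = ⋃ i, D i j + A i) :
    ∀ n j p dd, dd ∈ iterD (⇑Q) D n p j → dd +ᵥ A p ⊆ (⇑Q)^[n] '' A j := by
  intro n
  induction n with
  | zero =>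
    intro j p dd hdd
    simp only [iterD] at hdd
    split at hdd
    · rename_i h
      subst h
      simp only [Set.mem_singleton_iff] at hdd
      subst hdd
      simp
    · exact absurd hdd (Set.notMem_empty _)
  | succ n ih =>
    intro j p dd hdd
    simp only [iterD, Set.mem_iUnion] at hdd
    obtain ⟨l, hdd⟩ := hdd
    rw [Set.mem_add] at hdd
    obtain ⟨e, he, g, ⟨f, hf, rfl⟩, rfl⟩ := hdd
    have h1 : e +ᵥ A p ⊆ ⇑Q '' A l := by
      rw [htile l]
      rintro x ⟨y, hy, rfl⟩
      exact Set.mem_iUnion.2 ⟨p, Set.add_mem_add he hy⟩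
    have h2 : (e + Q f) +ᵥ A p = Q f +ᵥ (e +ᵥ A p) := by
      rw [vadd_vadd, add_comm]
    rw [h2]
    calc Q f +ᵥ (e +ᵥ A p) ⊆ Q f +ᵥ ⇑Q '' A l := Set.vadd_set_mono h1
      _ = ⇑Q '' (f +ᵥ A l) := (qimage_vadd_st16 Q f (A l)).symm
      _ ⊆ ⇑Q '' ((⇑Q)^[n] '' A j) := Set.image_mono (ih j l f hf)
      _ = (⇑Q)^[n+1] '' A j := by
          rw [Function.iterate_succ', Set.image_comp]

lemma density_st16 (hAint : ∀ p, A p = closure (interior (A p)))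
    (htile : ∀ j, ⇑Q '' A j = ⋃ i, D i j + A i) :
    ∀ n j, (⇑Q)^[n] '' A j ⊆
      closure (⋃ p, ⋃ dd ∈ iterD (⇑Q) D n p j, interior (dd +ᵥ A p)) := by
  intro n
  induction n with
  | zero =>
    intro j
    simp only [Function.iterate_zero, Set.image_id]
    calc A j = closure (interior (A j)) := hAint j
      _ ⊆ _ := by
        apply closure_mono
        intro x hx
        refine Set.mem_iUnion.2 ⟨j, Set.mem_iUnion.2 ⟨0, Set.mem_iUnion.2 ⟨?_, ?_⟩⟩⟩
        · simp [iterD]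
        · simpa using hx
  | succ n ih =>
    intro j
    rw [Function.iterate_succ', Set.image_comp]
    calc ⇑Q '' ((⇑Q)^[n] '' A j)
        ⊆ ⇑Q '' closure (⋃ p, ⋃ dd ∈ iterD (⇑Q) D n p j, interior (dd +ᵥ A p)) :=
          Set.image_mono (ih j)
      _ = closure (⇑Q '' ⋃ p, ⋃ dd ∈ iterD (⇑Q) D n p j, interior (dd +ᵥ A p)) :=
          (Q.toHomeomorph.image_closure _)
      _ ⊆ closure (closure (⋃ p, ⋃ dd ∈ iterD (⇑Q) D (n+1) p j, interior (dd +ᵥ A p))) := by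
          apply closure_mono
          intro x hx
          simp only [Set.image_iUnion, Set.mem_iUnion] at hx
          obtain ⟨q, dd, hdd, hx⟩ := hx
          have hx' : x ∈ ⇑Q '' (dd +ᵥ A q) := Set.image_mono interior_subset hx
          rw [qimage_vadd_st16] at hx'
          obtain ⟨u, hu, rfl⟩ := hx'
          rw [htile q] at hu
          obtain ⟨l, hu⟩ := Set.mem_iUnion.1 hu
          rw [Set.mem_add] at hu
          obtain ⟨e, he, y, hy, rfl⟩ := hu
          have hmem : (e + Q dd) ∈ iterD (⇑Q) D (n+1) l j := by
            simp only [iterD, Set.mem_iUnion]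
            exact ⟨q, Set.add_mem_add he ⟨dd, hdd, rfl⟩⟩
          have hxm : Q dd +ᵥ (e + y) ∈ (e + Q dd) +ᵥ A l := by
            refine ⟨y, hy, ?_⟩
            simp only [vadd_eq_add]
            abel
          have hsub : (e + Q dd) +ᵥ A l ⊆
              closure (⋃ p, ⋃ dd' ∈ iterD (⇑Q) D (n+1) p j, interior (dd' +ᵥ A p)) := by
            calc (e + Q dd) +ᵥ A l = (e + Q dd) +ᵥ closure (interior (A l)) := by
                  rw [← hAint l]
              _ = closure ((e + Q dd) +ᵥ interior (A l)) := (closure_vadd _ _).symm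
              _ = closure (interior ((e + Q dd) +ᵥ A l)) := by rw [interior_vadd]
              _ ⊆ _ := closure_mono (by
                  intro w hw
                  exact Set.mem_iUnion.2 ⟨l, Set.mem_iUnion.2 ⟨e + Q dd,
                    Set.mem_iUnion.2 ⟨hmem, hw⟩⟩⟩)
          exact hsub hxm
      _ = closure (⋃ p, ⋃ dd ∈ iterD (⇑Q) D (n+1) p j, interior (dd +ᵥ A p)) :=
          closure_closure

lemma interiors_disjoint_st16 (htile : ∀ j, ⇑Q '' A j = ⋃ i, D i j + A i)
    (hdisj : ∀ j : Fin m, ∀ i i' : Fin m, ∀ x ∈ D i j, ∀ x' ∈ D i' j,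
      (i, x) ≠ (i', x') → interior (x +ᵥ A i) ∩ interior (x' +ᵥ A i') = ∅) :
    ∀ n j p p' dd dd', dd ∈ iterD (⇑Q) D n p j → dd' ∈ iterD (⇑Q) D n p' j →
      (p, dd) ≠ (p', dd') →
      interior (dd +ᵥ A p) ∩ interior (dd' +ᵥ A p') = ∅ := by
  intro n
  induction n with
  | zero =>
    intro j p p' dd dd' hdd hdd' hne
    exfalso
    simp only [iterD] at hdd hdd'
    split at hdd
    · split at hdd'
      · rename_i h1 h2
        simp only [Set.mem_singleton_iff] at hdd hdd'
        exact hne (by rw [h1, h2, hdd, hdd'])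
      · exact Set.notMem_empty _ hdd'
    · exact Set.notMem_empty _ hdd
  | succ n ih =>
    intro j p p' dd dd' hdd hdd' hne
    simp only [iterD, Set.mem_iUnion] at hdd hdd'
    obtain ⟨l, hdd⟩ := hdd
    obtain ⟨l', hdd'⟩ := hdd'
    rw [Set.mem_add] at hdd hdd'
    obtain ⟨e, he, g, ⟨f, hf, rfl⟩, rfl⟩ := hdd
    obtain ⟨e', he', g', ⟨f', hf', rfl⟩, rfl⟩ := hdd'
    by_cases hlf : (l, f) = (l', f')
    · obtain ⟨hl, hf1⟩ := Prod.mk.injEq .. ▸ hlf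
      subst hl; subst hf1
      have hee : (p, e) ≠ (p', e') := by
        intro hc
        obtain ⟨h1, h2⟩ := Prod.mk.injEq .. ▸ hc
        exact hne (by rw [h1, h2])
      have h0 := hdisj l p p' e he e' he' hee
      have hv : ∀ (pp : Fin m) (ee : E),
          interior ((ee + Q f) +ᵥ A pp) = Q f +ᵥ interior (ee +ᵥ A pp) := by
        intro pp ee
        rw [show (ee + Q f) +ᵥ A pp = Q f +ᵥ (ee +ᵥ A pp) by rw [vadd_vadd, add_comm],
          interior_vadd]
      apply Set.eq_empty_iff_forall_notMem.2
      rintro x ⟨ha, hb⟩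
      rw [hv p e] at ha
      rw [hv p' e'] at hb
      obtain ⟨u, hu, rfl⟩ := ha
      obtain ⟨u', hu', hc⟩ := hb
      have : u' = u := by simpa [vadd_eq_add] using hc
      subst this
      exact Set.eq_empty_iff_forall_notMem.1 h0 u' ⟨hu, hu'⟩
    · have key : ∀ (pp : Fin m) (ee : E) (ll : Fin m) (ff : E), ee ∈ D pp ll →
          interior ((ee + Q ff) +ᵥ A pp) ⊆ ⇑Q '' interior (ff +ᵥ A ll) := by
        intro pp ee ll ff hee
        have h1 : (ee + Q ff) +ᵥ A pp ⊆ ⇑Q '' (ff +ᵥ A ll) := by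
          have h2 : ee +ᵥ A pp ⊆ ⇑Q '' A ll := by
            rw [htile ll]
            rintro x ⟨y, hy, rfl⟩
            exact Set.mem_iUnion.2 ⟨pp, Set.add_mem_add hee hy⟩
          calc (ee + Q ff) +ᵥ A pp = Q ff +ᵥ (ee +ᵥ A pp) := by rw [vadd_vadd, add_comm]
            _ ⊆ Q ff +ᵥ ⇑Q '' A ll := Set.vadd_set_mono h2
            _ = ⇑Q '' (ff +ᵥ A ll) := (qimage_vadd_st16 Q ff (A ll)).symm
        calc interior ((ee + Q ff) +ᵥ A pp) ⊆ interior (⇑Q '' (ff +ᵥ A ll)) :=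
              interior_mono h1
          _ = ⇑Q '' interior (ff +ᵥ A ll) := (Q.toHomeomorph.image_interior _).symm
      have h1 := key p e l f he
      have h2 := key p' e' l' f' he'
      have hIH := ih j l l' f f' hf hf' (by simpa [Prod.ext_iff] using hlf)
      apply Set.eq_empty_iff_forall_notMem.2
      rintro x ⟨ha, hb⟩
      obtain ⟨u, hu, rfl⟩ := h1 ha
      obtain ⟨u', hu', hc⟩ := h2 hb
      have : u' = u := Q.injective hc
      subst this
      exact Set.eq_empty_iff_forall_notMem.1 hIH u' ⟨hu, hu'⟩

lemma meas_iter_st16 [MeasurableSpace E] [BorelSpace E] [FiniteDimensional ℝ E]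
    (μ : Measure E) [μ.IsAddHaarMeasure] (n : ℕ) (s : Set E) :
    μ ((⇑Q)^[n] '' s) =
      (ENNReal.ofReal |LinearMap.det (Q.toLinearEquiv : E →ₗ[ℝ] E)|) ^ n * μ s := by
  induction n with
  | zero => simp
  | succ n ih =>
    rw [Function.iterate_succ', Set.image_comp]
    have hco : ⇑Q '' ((⇑Q)^[n] '' s) = ⇑(Q.toLinearEquiv : E →ₗ[ℝ] E) '' ((⇑Q)^[n] '' s) := by
      congr 1
    rw [hco, μ.addHaar_image_linearMap, ih, pow_succ]
    ring

lemma norm_decay_st16 [Nontrivial E] (T : E →L[ℝ] E) (k : ℕ) (hk : 1 ≤ k) (h : ‖T ^ k‖ < 1)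
    (ε : ℝ) (hε : 0 < ε) : ∃ n0 : ℕ, ∀ n ≥ n0, ‖T ^ n‖ ≤ ε := by
  set θ := ‖T ^ k‖ with hθ
  have hθ0 : 0 ≤ θ := norm_nonneg _
  set C := ∑ r ∈ Finset.range k, ‖T ^ r‖ with hC
  have hCr : ∀ r < k, ‖T ^ r‖ ≤ C := by
    intro r hr
    exact Finset.single_le_sum (f := fun r => ‖T ^ r‖) (fun _ _ => norm_nonneg _)
      (Finset.mem_range.2 hr)
  have htend : Filter.Tendsto (fun s : ℕ => θ ^ s * C) Filter.atTop (nhds 0) := by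
    have := tendsto_pow_atTop_nhds_zero_of_lt_one hθ0 h
    simpa using this.mul_const C
  have hev : ∀ᶠ s : ℕ in Filter.atTop, θ ^ s * C ≤ ε := by
    filter_upwards [htend.eventually (eventually_le_nhds hε)] with s hs using hs
  obtain ⟨s0, hs0⟩ := Filter.eventually_atTop.1 hev
  refine ⟨k * s0 + k, fun n hn => ?_⟩
  have hkpos : 0 < k := hk
  have hdiv : s0 ≤ n / k := by
    rw [Nat.le_div_iff_mul_le hkpos, mul_comm]
    omega
  have hsplit : T ^ n = (T ^ k) ^ (n / k) * T ^ (n % k) := by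
    rw [← pow_mul, ← pow_add]
    congr 1
    exact (Nat.div_add_mod n k).symm
  calc ‖T ^ n‖ ≤ ‖(T ^ k) ^ (n / k)‖ * ‖T ^ (n % k)‖ := hsplit ▸ norm_mul_le _ _
    _ ≤ θ ^ (n / k) * C := by
        apply mul_le_mul (norm_pow_le' _ ?_) (hCr _ (Nat.mod_lt _ hkpos)) (norm_nonneg _)
          (pow_nonneg hθ0 _)
        have hkn : k ≤ n := by omega
        exact Nat.div_pos hkn hkpos
    _ ≤ ε := hs0 _ hdiv

lemma exists_pair_st16 (hAint : ∀ p, A p = closure (interior (A p)))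
    (htile : ∀ j, ⇑Q '' A j = ⋃ i, D i j + A i)
    (z : E) (i j : Fin m) (n : ℕ) (O : Set E) (hO : IsOpen O) (hne : O.Nonempty)
    (hOU : O ⊆ (⇑Q)^[n] '' (interior (z +ᵥ A i) ∩ interior (A j))) :
    ∃ p q dd dd' w, dd ∈ iterD (⇑Q) D n p i ∧ dd' ∈ iterD (⇑Q) D n q j ∧ w ∈ O ∧
      w ∈ interior (((⇑Q)^[n] z + dd) +ᵥ A p) ∧ w ∈ interior (dd' +ᵥ A q) := by
  set Vj := ⋃ p, ⋃ dd ∈ iterD (⇑Q) D n p j, interior (dd +ᵥ A p) with hVj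
  set Vi := ⋃ p, ⋃ dd ∈ iterD (⇑Q) D n p i, interior (dd +ᵥ A p) with hVi
  have hVjopen : IsOpen Vj := isOpen_iUnion fun p => isOpen_iUnion fun dd =>
    isOpen_iUnion fun _ => isOpen_interior
  have hOj : O ⊆ closure Vj := by
    refine hOU.trans ?_
    refine (Set.image_mono ?_).trans (density_st16 Q D A hAint htile n j)
    exact (Set.inter_subset_right).trans interior_subset
  obtain ⟨x, hx⟩ := hne
  have h1 : (O ∩ Vj).Nonempty := _root_.mem_closure_iff.1 (hOj hx) O hO hx
  have h2 : O ∩ Vj ⊆ closure ((⇑Q)^[n] z +ᵥ Vi) := by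
    refine (Set.inter_subset_left.trans hOU).trans ?_
    have hsub : interior (z +ᵥ A i) ∩ interior (A j) ⊆ z +ᵥ A i :=
      Set.inter_subset_left.trans interior_subset
    refine (Set.image_mono hsub).trans ?_
    rw [iter_image_vadd_st16]
    refine (Set.vadd_set_mono ((density_st16 Q D A hAint htile n i))).trans ?_
    rw [closure_vadd]
  obtain ⟨y, hy⟩ := h1
  have h3 : ((O ∩ Vj) ∩ ((⇑Q)^[n] z +ᵥ Vi)).Nonempty :=
    _root_.mem_closure_iff.1 (h2 hy) (O ∩ Vj) (hO.inter hVjopen) hy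
  obtain ⟨w, ⟨⟨hwO, hwVj⟩, hwVi⟩⟩ := h3
  simp only [hVj, Set.mem_iUnion] at hwVj
  obtain ⟨q, dd', hdd', hw2⟩ := hwVj
  obtain ⟨u, hu, rfl⟩ := hwVi
  simp only [hVi, Set.mem_iUnion] at hu
  obtain ⟨p, dd, hdd, hu⟩ := hu
  refine ⟨p, q, dd, dd', (⇑Q)^[n] z +ᵥ u, hdd, hdd', hwO, ?_, hw2⟩
  have heq : ((⇑Q)^[n] z + dd) +ᵥ A p = (⇑Q)^[n] z +ᵥ (dd +ᵥ A p) := by rw [vadd_vadd]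
  rw [heq, interior_vadd]
  exact ⟨u, hu, rfl⟩

end AuxST16
/-- real overlaps generate exponentially many overlapping pairs under
inflation: if the interiors of `z + A_i` and `A_j` intersect, then the number of
overlapping inflated pairs at level `n` is comparable to `|det Q|ⁿ`. -/
theorem stmt_16 (d m k : ℕ) (hd : 1 ≤ d) (hm : 1 ≤ m) (hk : 1 ≤ k)
    (Q : EuclideanSpace ℝ (Fin d) ≃L[ℝ] EuclideanSpace ℝ (Fin d))
    (hQk : ‖(Q.symm : EuclideanSpace ℝ (Fin d) →L[ℝ] EuclideanSpace ℝ (Fin d)) ^ k‖ < 1)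
    (D : Fin m → Fin m → Set (EuclideanSpace ℝ (Fin d)))
    (hDfin : ∀ i j, (D i j).Finite)
    (A : Fin m → Set (EuclideanSpace ℝ (Fin d)))
    (hAne : ∀ i, (A i).Nonempty) (hAcp : ∀ i, IsCompact (A i))
    (hAint : ∀ i, A i = closure (interior (A i)))
    (htile : ∀ j, ⇑Q '' A j = ⋃ i, D i j + A i)
    (hdisj : ∀ j : Fin m, ∀ i i' : Fin m, ∀ x ∈ D i j, ∀ x' ∈ D i' j,
      (i, x) ≠ (i', x') → interior (x +ᵥ A i) ∩ interior (x' +ᵥ A i') = ∅)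
    (z : EuclideanSpace ℝ (Fin d)) (i j : Fin m)
    (hover : (interior (z +ᵥ A i) ∩ interior (A j)).Nonempty) :
    ∃ c₁ > (0 : ℝ), ∃ c₂ > (0 : ℝ), ∀ n : ℕ, 1 ≤ n →
      c₁ * |LinearMap.det (Q.toLinearEquiv : EuclideanSpace ℝ (Fin d) →ₗ[ℝ] EuclideanSpace ℝ (Fin d))| ^ n ≤
        ({ t : Fin m × Fin m × EuclideanSpace ℝ (Fin d) × EuclideanSpace ℝ (Fin d) |
          ∃ p q dd dd', t = (p, q, dd, dd') ∧ dd ∈ iterD (⇑Q) D n p i ∧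
            dd' ∈ iterD (⇑Q) D n q j ∧
            (interior (((⇑Q)^[n] z + dd) +ᵥ A p) ∩ interior (dd' +ᵥ A q)).Nonempty }.ncard : ℝ) ∧
      ({ t : Fin m × Fin m × EuclideanSpace ℝ (Fin d) × EuclideanSpace ℝ (Fin d) |
          ∃ p q dd dd', t = (p, q, dd, dd') ∧ dd ∈ iterD (⇑Q) D n p i ∧
            dd' ∈ iterD (⇑Q) D n q j ∧
            (interior (((⇑Q)^[n] z + dd) +ᵥ A p) ∩ interior (dd' +ᵥ A q)).Nonempty }.ncard : ℝ) ≤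
        c₂ * |LinearMap.det (Q.toLinearEquiv : EuclideanSpace ℝ (Fin d) →ₗ[ℝ] EuclideanSpace ℝ (Fin d))| ^ n := by
  classical
  haveI hmne : Nonempty (Fin m) := ⟨⟨0, hm⟩⟩
  haveI hdne : Nonempty (Fin d) := ⟨⟨0, hd⟩⟩
  set detL := LinearMap.det (Q.toLinearEquiv :
    EuclideanSpace ℝ (Fin d) →ₗ[ℝ] EuclideanSpace ℝ (Fin d)) with hdetL
  have hdet0 : 0 < |detL| := abs_pos.2 (LinearEquiv.isUnit_det' Q.toLinearEquiv).ne_zero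
  set Δ := ENNReal.ofReal |detL| with hΔ
  have hΔ0 : Δ ≠ 0 := by
    simp only [hΔ, ne_eq, ENNReal.ofReal_eq_zero, not_le]
    exact hdet0
  have hΔtop : Δ ≠ ⊤ := ENNReal.ofReal_ne_top
  have hmeas : ∀ (n : ℕ) (s : Set (EuclideanSpace ℝ (Fin d))), volume ((⇑Q)^[n] '' s) = Δ ^ n * volume s :=
    fun n s => meas_iter_st16 Q volume n s
  have hint : ∀ p, (interior (A p)).Nonempty := fun p => by
    rw [← closure_nonempty_iff, ← hAint p]; exact hAne p
  -- minimal interior volume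
  obtain ⟨p0, hp0⟩ := Finite.exists_min fun p : Fin m => volume (interior (A p))
  set v := volume (interior (A p0)) with hv
  have hv0 : 0 < v := isOpen_interior.measure_pos volume (hint p0)
  have hvtop : v ≠ ⊤ :=
    ((measure_mono interior_subset).trans_lt (hAcp p0).measure_lt_top).ne
  have hvle : ∀ (p : Fin m) (dd : EuclideanSpace ℝ (Fin d)), v ≤ volume (interior (dd +ᵥ A p)) := by
    intro p dd
    rw [interior_vadd, measure_vadd]
    exact hp0 p
  -- max diameter
  obtain ⟨q0, hq0⟩ := Finite.exists_max fun p : Fin m => Metric.diam (A p)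
  set R := Metric.diam (A q0) with hR
  have hR0 : 0 ≤ R := Metric.diam_nonneg
  set a := fun p => (hAne p).some with ha
  have hamem : ∀ p, a p ∈ A p := fun p => (hAne p).some_mem
  have hdistbase : ∀ (p : Fin m) (dd w : EuclideanSpace ℝ (Fin d)), w ∈ dd +ᵥ A p → dist w (dd + a p) ≤ R := by
    rintro p dd w ⟨y, hy, rfl⟩
    calc dist (dd +ᵥ y) (dd + a p) = dist y (a p) := by
          simp only [vadd_eq_add, dist_add_left]
      _ ≤ Metric.diam (A p) := Metric.dist_le_diam_of_mem (hAcp p).isBounded hy (hamem p)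
      _ ≤ R := hq0 p
  have hdist2 : ∀ (p : Fin m) (dd w w' : EuclideanSpace ℝ (Fin d)), w ∈ dd +ᵥ A p → w' ∈ dd +ᵥ A p →
      dist w w' ≤ R := by
    rintro p dd w w' ⟨y, hy, rfl⟩ ⟨y', hy', rfl⟩
    calc dist (dd +ᵥ y) (dd +ᵥ y') = dist y y' := by simp only [vadd_eq_add, dist_add_left]
      _ ≤ Metric.diam (A p) := Metric.dist_le_diam_of_mem (hAcp p).isBounded hy hy'
      _ ≤ R := hq0 p
  have hballmeas : ∀ (c : EuclideanSpace ℝ (Fin d)) (r : ℝ),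
      volume (Metric.closedBall c r) = volume (Metric.closedBall (0 : EuclideanSpace ℝ (Fin d)) r) := by
    intro c r
    have hcb : Metric.closedBall c r = c +ᵥ Metric.closedBall (0 : EuclideanSpace ℝ (Fin d)) r := by
      rw [Metric.vadd_closedBall, vadd_eq_add, add_zero]
    rw [hcb, measure_vadd]
  set B2 := volume (Metric.closedBall (0 : EuclideanSpace ℝ (Fin d)) (2 * R)) with hB2
  have hB2top : B2 ≠ ⊤ := (isCompact_closedBall _ _).measure_lt_top.ne
  -- lower-bound constants
  set U := interior (z +ᵥ A i) ∩ interior (A j) with hU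
  have hUopen : IsOpen U := isOpen_interior.inter isOpen_interior
  obtain ⟨x0, hx0⟩ := hover
  obtain ⟨ρ, hρ0, hρ⟩ := Metric.isOpen_iff.1 hUopen x0 hx0
  obtain ⟨n0, hn0⟩ := norm_decay_st16 (Q.symm : EuclideanSpace ℝ (Fin d) →L[ℝ] EuclideanSpace ℝ (Fin d)) k hk hQk (ρ/2) (by positivity)
  have hTiter : ∀ (n : ℕ) (x : EuclideanSpace ℝ (Fin d)), ((Q.symm : EuclideanSpace ℝ (Fin d) →L[ℝ] EuclideanSpace ℝ (Fin d)) ^ n) x = (⇑Q.symm)^[n] x := by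
    intro n
    induction n with
    | zero => intro x; simp
    | succ n ih =>
      intro x
      rw [pow_succ, ContinuousLinearMap.mul_apply, Function.iterate_succ_apply]
      exact ih _
  have hQQs : ∀ (n : ℕ) (x : EuclideanSpace ℝ (Fin d)), (⇑Q)^[n] ((⇑Q.symm)^[n] x) = x := fun n =>
    Function.LeftInverse.iterate (fun x => Q.apply_symm_apply x) n
  set b0 := volume (Metric.ball x0 (ρ/2)) with hb0
  have hb0pos : 0 < b0 := Metric.measure_ball_pos volume x0 (by positivity)
  have hb0top : b0 ≠ ⊤ :=
    ((measure_mono Metric.ball_subset_closedBall).trans_lt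
      (isCompact_closedBall _ _).measure_lt_top).ne
  set B' := volume (Metric.closedBall (0 : EuclideanSpace ℝ (Fin d)) (R + 2)) with hB'
  have hB'0 : 0 < B' := Metric.measure_closedBall_pos volume 0 (by positivity)
  have hB'top : B' ≠ ⊤ := (isCompact_closedBall _ _).measure_lt_top.ne
  set c1a := (b0 / B').toReal with hc1adef
  have hc1a : 0 < c1a := by
    apply ENNReal.toReal_pos
    · simp only [ne_eq, ENNReal.div_eq_zero_iff, not_or]
      exact ⟨hb0pos.ne', hB'top⟩
    · exact (ENNReal.div_lt_top hb0top hB'0.ne').ne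
  set Md := max 1 |detL| with hMd
  have hMd1 : (1:ℝ) ≤ Md := le_max_left _ _
  set c1b := 1 / Md ^ n0 with hc1b
  have hc1bpos : 0 < c1b := by positivity
  refine ⟨min c1a c1b, lt_min hc1a hc1bpos, (volume (A i) / v * (B2 / v)).toReal + 1,
    by positivity, ?_⟩
  intro n hn1
  set S := { t : Fin m × Fin m × EuclideanSpace ℝ (Fin d) × EuclideanSpace ℝ (Fin d) |
      ∃ p q dd dd', t = (p, q, dd, dd') ∧ dd ∈ iterD (⇑Q) D n p i ∧
        dd' ∈ iterD (⇑Q) D n q j ∧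
        (interior (((⇑Q)^[n] z + dd) +ᵥ A p) ∩ interior (dd' +ᵥ A q)).Nonempty } with hSdef
  have hSfin : S.Finite := by
    have hDi : (⋃ p, iterD (⇑Q) D n p i).Finite :=
      Set.finite_iUnion fun p => iterD_finite_st16 Q D hDfin n p i
    have hDj : (⋃ p, iterD (⇑Q) D n p j).Finite :=
      Set.finite_iUnion fun p => iterD_finite_st16 Q D hDfin n p j
    apply Set.Finite.subset (Set.finite_univ.prod (Set.finite_univ.prod (hDi.prod hDj)))
    rintro t ⟨p, q, dd, dd', rfl, h1, h2, _⟩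
    exact ⟨Set.mem_univ _, Set.mem_univ _, Set.mem_iUnion.2 ⟨p, h1⟩, Set.mem_iUnion.2 ⟨q, h2⟩⟩
  constructor
  · -- LOWER BOUND
    by_cases hcase : n0 ≤ n
    · -- main case: covering argument
      set K := (⇑Q)^[n] '' Metric.closedBall x0 (ρ/2) with hK
      have hKcp : IsCompact K :=
        (isCompact_closedBall x0 (ρ/2)).image (Q.continuous.iterate n)
      obtain ⟨t, htK, htfin, hcov⟩ := hKcp.finite_cover_balls (e := 1) one_pos
      have hball : ∀ c ∈ t, Metric.ball c 1 ⊆ (⇑Q)^[n] '' U := by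
        intro c hc w hw
        obtain ⟨y0, hy0, rfl⟩ := htK hc
        set u := ((Q.symm : EuclideanSpace ℝ (Fin d) →L[ℝ] EuclideanSpace ℝ (Fin d)) ^ n)
          (w - (⇑Q)^[n] y0) with hu
        have h2 : ‖w - (⇑Q)^[n] y0‖ < 1 := by
          rw [← dist_eq_norm]
          exact Metric.mem_ball.1 hw
        have h1 : ‖u‖ ≤ ρ/2 * ‖w - (⇑Q)^[n] y0‖ := by
          refine (ContinuousLinearMap.le_opNorm _ _).trans ?_
          exact mul_le_mul_of_nonneg_right (hn0 n hcase) (norm_nonneg _)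
        have h3 : ‖u‖ < ρ/2 := h1.trans_lt (by nlinarith)
        refine ⟨y0 + u, hρ ?_, ?_⟩
        · rw [Metric.mem_ball]
          calc dist (y0 + u) x0 ≤ dist (y0 + u) y0 + dist y0 x0 := dist_triangle _ _ _
            _ < ρ/2 + ρ/2 := by
                apply add_lt_add_of_lt_of_le
                · rw [dist_eq_norm]
                  simpa using h3
                · exact Metric.mem_closedBall.1 hy0
            _ = ρ := by ring
        · rw [iter_add_st16]
          have h4 : (⇑Q)^[n] u = w - (⇑Q)^[n] y0 := by
            rw [hu, hTiter]
            exact hQQs n _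
          rw [h4]
          abel
      have hchoice : ∀ c ∈ t, ∃ τ : Fin m × Fin m ×
          EuclideanSpace ℝ (Fin d) × EuclideanSpace ℝ (Fin d),
          τ ∈ S ∧ ∃ w ∈ Metric.ball c 1, w ∈ τ.2.2.2 +ᵥ A τ.2.1 := by
        intro c hc
        obtain ⟨p, q, dd, dd', w, h1, h2, h3, h4, h5⟩ :=
          exists_pair_st16 Q D A hAint htile z i j n (Metric.ball c 1) Metric.isOpen_ball
            ⟨c, Metric.mem_ball_self one_pos⟩ (hball c hc)
        exact ⟨(p, q, dd, dd'), ⟨p, q, dd, dd', rfl, h1, h2, w, h4, h5⟩, w, h3,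
          interior_subset h5⟩
      choose! g hgS wc hwc1 hwc2 using hchoice
      set tF := htfin.toFinset with htF
      have hcov2 : K ⊆ ⋃ τ ∈ tF.image g, Metric.closedBall (τ.2.2.2 + a τ.2.1) (R + 2) := by
        intro e he
        obtain ⟨c, hc, hec⟩ := Set.mem_iUnion₂.1 (hcov he)
        refine Set.mem_iUnion₂.2 ⟨g c, Finset.mem_image_of_mem g (htfin.mem_toFinset.2 hc), ?_⟩
        have hd1 : dist e (wc c) ≤ 2 :=
          calc dist e (wc c) ≤ dist e c + dist c (wc c) := dist_triangle _ _ _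
            _ ≤ 1 + 1 := by
                apply add_le_add (Metric.mem_ball.1 hec).le
                rw [dist_comm]
                exact (Metric.mem_ball.1 (hwc1 c hc)).le
            _ = 2 := by norm_num
        have hd2 : dist (wc c) ((g c).2.2.2 + a (g c).2.1) ≤ R :=
          hdistbase _ _ _ (hwc2 c hc)
        rw [Metric.mem_closedBall]
        calc dist e ((g c).2.2.2 + a (g c).2.1) ≤ dist e (wc c) +
              dist (wc c) ((g c).2.2.2 + a (g c).2.1) := dist_triangle _ _ _
          _ ≤ 2 + R := add_le_add hd1 hd2
          _ = R + 2 := by ring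
      have hKle : volume K ≤ ((tF.image g).card : ℝ≥0∞) * B' := by
        calc volume K ≤ ∑ τ ∈ tF.image g,
              volume (Metric.closedBall (τ.2.2.2 + a τ.2.1) (R + 2)) :=
              (measure_mono hcov2).trans (measure_biUnion_finset_le _ _)
          _ = ((tF.image g).card : ℝ≥0∞) * B' := by
              rw [Finset.sum_congr rfl fun τ _ => hballmeas (τ.2.2.2 + a τ.2.1) (R + 2),
                Finset.sum_const, nsmul_eq_mul]
      have hKge : Δ ^ n * b0 ≤ volume K := by
        rw [hK, ← hmeas n]
        exact measure_mono (Set.image_mono Metric.ball_subset_closedBall)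
      have hcard : ((tF.image g).card : ℝ≥0∞) ≤ (S.ncard : ℝ≥0∞) := by
        have hsub : tF.image g ⊆ hSfin.toFinset := by
          intro τ hτ
          obtain ⟨c, hc, rfl⟩ := Finset.mem_image.1 hτ
          exact hSfin.mem_toFinset.2 (hgS c (htfin.mem_toFinset.1 hc))
        have hle := Finset.card_le_card hsub
        rw [Set.ncard_eq_toFinset_card S hSfin]
        exact_mod_cast hle
      have hfinal : Δ ^ n * (b0 / B') ≤ (S.ncard : ℝ≥0∞) := by
        have hrw : Δ ^ n * (b0 / B') = Δ ^ n * b0 / B' := by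
          rw [div_eq_mul_inv, div_eq_mul_inv, mul_assoc]
        rw [hrw]
        exact (ENNReal.div_le_iff_le_mul (Or.inl hB'0.ne') (Or.inl hB'top)).2
          (hKge.trans (hKle.trans (mul_le_mul_left hcard B')))
      have hreal : c1a * |detL| ^ n ≤ (S.ncard : ℝ) := by
        have h := ENNReal.toReal_mono (by simp) hfinal
        rw [ENNReal.toReal_mul, ENNReal.toReal_pow] at h
        have hΔr : Δ.toReal = |detL| := by
          rw [hΔ, ENNReal.toReal_ofReal (abs_nonneg _)]
        rw [hΔr] at h
        simpa [hc1adef, mul_comm] using h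
      calc min c1a c1b * |detL| ^ n ≤ c1a * |detL| ^ n :=
            mul_le_mul_of_nonneg_right (min_le_left _ _) (by positivity)
        _ ≤ _ := hreal
    · -- small n: at least one pair exists
      have hopenmap : ∀ nn, IsOpenMap ((⇑Q)^[nn]) := by
        intro nn
        induction nn with
        | zero => simpa using IsOpenMap.id
        | succ nn ih =>
          rw [Function.iterate_succ']
          exact (Q.toHomeomorph.isOpenMap).comp ih
      have hOne : ((⇑Q)^[n] '' Metric.ball x0 ρ).Nonempty :=
        Set.Nonempty.image _ ⟨x0, Metric.mem_ball_self hρ0⟩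
      obtain ⟨p, q, dd, dd', w, h1, h2, h3, h4, h5⟩ :=
        exists_pair_st16 Q D A hAint htile z i j n _ (hopenmap n _ Metric.isOpen_ball) hOne
          (Set.image_mono hρ)
      have hSne : S.Nonempty := ⟨(p, q, dd, dd'), p, q, dd, dd', rfl, h1, h2, w, h4, h5⟩
      have h1le : (1 : ℝ) ≤ (S.ncard : ℝ) := by
        have hpos := (Set.ncard_pos hSfin).2 hSne
        exact_mod_cast hpos
      have hpow : |detL| ^ n ≤ Md ^ n0 := by
        calc |detL| ^ n ≤ Md ^ n := pow_le_pow_left₀ (abs_nonneg _) (le_max_right _ _) n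
          _ ≤ Md ^ n0 := pow_le_pow_right₀ hMd1 (le_of_not_ge hcase)
      calc min c1a c1b * |detL| ^ n ≤ c1b * |detL| ^ n :=
            mul_le_mul_of_nonneg_right (min_le_right _ _) (by positivity)
        _ ≤ c1b * Md ^ n0 := mul_le_mul_of_nonneg_left hpow hc1bpos.le
        _ = 1 := by
            rw [hc1b]
            field_simp
        _ ≤ _ := h1le
  · -- UPPER BOUND
    set F := hSfin.toFinset with hF
    set Φ : Fin m × Fin m × EuclideanSpace ℝ (Fin d) × EuclideanSpace ℝ (Fin d) →
        Fin m × EuclideanSpace ℝ (Fin d) := fun τ => (τ.1, τ.2.2.1) with hΦ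
    have hfiber : ∀ b ∈ F.image Φ,
        ((F.filter (fun τ => Φ τ = b)).card : ℝ≥0∞) * v ≤ B2 := by
      intro b hb
      obtain ⟨τ0, hτ0F, hτ0b⟩ := Finset.mem_image.1 hb
      have hτ0S := hSfin.mem_toFinset.1 (hF ▸ hτ0F)
      obtain ⟨p, q, dd, dd', heq0, h1, h2, hww⟩ := hτ0S
      subst heq0
      have hbval : b = (p, dd) := by
        rw [← hτ0b, hΦ]
      subst hbval
      set cc := (⇑Q)^[n] z + dd + a p with hcc
      have hGprop : ∀ τ ∈ F.filter (fun τ => Φ τ = (p, dd)),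
          τ.2.2.2 ∈ iterD (⇑Q) D n τ.2.1 j ∧
          interior (τ.2.2.2 +ᵥ A τ.2.1) ⊆ Metric.closedBall cc (2 * R) := by
        intro τ hτ
        obtain ⟨hτF, hτb⟩ := Finset.mem_filter.1 hτ
        obtain ⟨p', q', dd2, dd2', heq, h1', h2', w, hwa, hwb⟩ := hSfin.mem_toFinset.1 (hF ▸ hτF)
        subst heq
        have hpd : p' = p ∧ dd2 = dd := by
          simpa [hΦ, Prod.ext_iff] using hτb
        obtain ⟨rfl, rfl⟩ := hpd
        refine ⟨h2', ?_⟩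
        have hdw : dist w cc ≤ R := by
          have hmem := interior_subset hwa
          have hb1 := hdistbase p' ((⇑Q)^[n] z + dd2) w hmem
          rw [hcc]
          exact hb1
        intro x hx
        have hx' : x ∈ dd2' +ᵥ A q' := interior_subset hx
        have hw' : w ∈ dd2' +ᵥ A q' := interior_subset hwb
        have hdxw : dist x w ≤ R := hdist2 q' dd2' x w hx' hw'
        rw [Metric.mem_closedBall]
        calc dist x cc ≤ dist x w + dist w cc := dist_triangle _ _ _
          _ ≤ R + R := add_le_add hdxw hdw
          _ = 2 * R := by ring
      have hdisjG : (↑(F.filter (fun τ => Φ τ = (p, dd))) :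
          Set (Fin m × Fin m × EuclideanSpace ℝ (Fin d) × EuclideanSpace ℝ (Fin d))).PairwiseDisjoint
          (fun τ : Fin m × Fin m × EuclideanSpace ℝ (Fin d) × EuclideanSpace ℝ (Fin d) =>
            interior (τ.2.2.2 +ᵥ A τ.2.1)) := by
        intro τ1 hτ1 τ2 hτ2 hne12
        have hm1 := hGprop τ1 (Finset.mem_coe.1 hτ1)
        have hm2 := hGprop τ2 (Finset.mem_coe.1 hτ2)
        have e1 : Φ τ1 = (p, dd) := (Finset.mem_filter.1 (Finset.mem_coe.1 hτ1)).2
        have e2 : Φ τ2 = (p, dd) := (Finset.mem_filter.1 (Finset.mem_coe.1 hτ2)).2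
        have hqd : (τ1.2.1, τ1.2.2.2) ≠ (τ2.2.1, τ2.2.2.2) := by
          intro hcq
          apply hne12
          obtain ⟨a1, b1, c1, d1⟩ := τ1
          obtain ⟨a2, b2, c2, d2⟩ := τ2
          simp only [hΦ, Prod.mk.injEq] at e1 e2 hcq
          simp only [Prod.mk.injEq]
          exact ⟨e1.1.trans e2.1.symm, hcq.1, (e1.2).trans (e2.2).symm, hcq.2⟩
        exact Set.disjoint_iff_inter_eq_empty.2
          (interiors_disjoint_st16 Q D A htile hdisj n j _ _ _ _ hm1.1 hm2.1 hqd)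
      have hunion := measure_biUnion_finset (μ := volume) hdisjG
        (fun τ _ => isOpen_interior.measurableSet)
      calc ((F.filter (fun τ => Φ τ = (p, dd))).card : ℝ≥0∞) * v
          = (F.filter (fun τ => Φ τ = (p, dd))).card • v := by rw [nsmul_eq_mul]
        _ ≤ ∑ τ ∈ F.filter (fun τ => Φ τ = (p, dd)),
              volume (interior (τ.2.2.2 +ᵥ A τ.2.1)) :=
            Finset.card_nsmul_le_sum _ _ v fun τ _ => hvle _ _
        _ = volume (⋃ τ ∈ F.filter (fun τ => Φ τ = (p, dd)),
              interior (τ.2.2.2 +ᵥ A τ.2.1)) := hunion.symm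
        _ ≤ volume (Metric.closedBall cc (2 * R)) :=
            measure_mono (Set.iUnion₂_subset fun τ hτ => (hGprop τ hτ).2)
        _ = B2 := hballmeas cc (2 * R)
    have himage : ((F.image Φ).card : ℝ≥0∞) * v ≤ Δ ^ n * volume (A i) := by
      have hmemI : ∀ b ∈ F.image Φ, b.2 ∈ iterD (⇑Q) D n b.1 i := by
        intro b hb
        obtain ⟨τ0, hτ0F, rfl⟩ := Finset.mem_image.1 hb
        obtain ⟨p, q, dd, dd', heq0, h1, h2, _⟩ := hSfin.mem_toFinset.1 (hF ▸ hτ0F)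
        subst heq0
        simpa [hΦ] using h1
      have hdisjI : (↑(F.image Φ) : Set (Fin m × EuclideanSpace ℝ (Fin d))).PairwiseDisjoint
          (fun b : Fin m × EuclideanSpace ℝ (Fin d) => interior (b.2 +ᵥ A b.1)) := by
        intro b1 hb1 b2 hb2 hne12
        refine Set.disjoint_iff_inter_eq_empty.2
          (interiors_disjoint_st16 Q D A htile hdisj n i _ _ _ _
            (hmemI b1 (Finset.mem_coe.1 hb1)) (hmemI b2 (Finset.mem_coe.1 hb2)) ?_)
        simpa using hne12
      have hunion := measure_biUnion_finset (μ := volume) hdisjI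
        (fun b _ => isOpen_interior.measurableSet)
      calc ((F.image Φ).card : ℝ≥0∞) * v = (F.image Φ).card • v := by rw [nsmul_eq_mul]
        _ ≤ ∑ b ∈ F.image Φ, volume (interior (b.2 +ᵥ A b.1)) :=
            Finset.card_nsmul_le_sum _ _ v fun b _ => hvle _ _
        _ = volume (⋃ b ∈ F.image Φ, interior (b.2 +ᵥ A b.1)) := hunion.symm
        _ ≤ volume ((⇑Q)^[n] '' A i) := measure_mono (Set.iUnion₂_subset fun b hb =>
            interior_subset.trans (piece_subset_st16 Q D A htile n i b.1 b.2 (hmemI b hb)))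
        _ = Δ ^ n * volume (A i) := hmeas n (A i)
    have hcount : (S.ncard : ℝ≥0∞) ≤ Δ ^ n * (volume (A i) / v * (B2 / v)) := by
      have hrearr : (Δ ^ n * volume (A i) / v) * (B2 / v) =
          Δ ^ n * (volume (A i) / v * (B2 / v)) := by
        rw [div_eq_mul_inv, div_eq_mul_inv, div_eq_mul_inv]
        ring
      rw [← hrearr]
      calc (S.ncard : ℝ≥0∞) = (F.card : ℝ≥0∞) := by
            rw [hF, Set.ncard_eq_toFinset_card S hSfin]
        _ = ∑ b ∈ F.image Φ, ((F.filter fun τ => Φ τ = b).card : ℝ≥0∞) := by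
            rw [Finset.card_eq_sum_card_image Φ F]
            push_cast
            rfl
        _ ≤ ∑ _b ∈ F.image Φ, B2 / v := Finset.sum_le_sum fun b hb =>
            (ENNReal.le_div_iff_mul_le (Or.inl hv0.ne') (Or.inl hvtop)).2 (hfiber b hb)
        _ = ((F.image Φ).card : ℝ≥0∞) * (B2 / v) := by
            rw [Finset.sum_const, nsmul_eq_mul]
        _ ≤ (Δ ^ n * volume (A i) / v) * (B2 / v) :=
            mul_le_mul_left
              ((ENNReal.le_div_iff_mul_le (Or.inl hv0.ne') (Or.inl hvtop)).2 himage) _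
    have hCne : volume (A i) / v * (B2 / v) ≠ ⊤ :=
      ENNReal.mul_ne_top (ENNReal.div_lt_top (hAcp i).measure_lt_top.ne hv0.ne').ne
        (ENNReal.div_lt_top hB2top hv0.ne').ne
    have h := ENNReal.toReal_mono (ENNReal.mul_ne_top (ENNReal.pow_ne_top hΔtop) hCne) hcount
    rw [ENNReal.toReal_mul, ENNReal.toReal_pow] at h
    have hΔr : Δ.toReal = |detL| := by
      rw [hΔ, ENNReal.toReal_ofReal (abs_nonneg _)]
    rw [hΔr] at h
    have hncr : ((S.ncard : ℝ≥0∞)).toReal = (S.ncard : ℝ) := by simp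
    rw [hncr] at h
    calc (S.ncard : ℝ) ≤ |detL| ^ n * (volume (A i) / v * (B2 / v)).toReal := h
      _ ≤ ((volume (A i) / v * (B2 / v)).toReal + 1) * |detL| ^ n := by
          rw [mul_comm]
          apply mul_le_mul_of_nonneg_right (by linarith) (by positivity)
end
end
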